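/- arXiv:2306.05277 — 5 statements merged into one kernel-verified Lean document; each statement's English description precedes it below -/
import Mathlib

section
/- Let Q be a shift-invariant probability measure on Ω = A^ℕ satisfying the upper decoupling property (UD) in event form: Q(A ∩ T^{-n-τ_n}B) ≤ C_n Q(A) Q(B) for all n ∈ ℕ, A ∈ F_n, B measurable, with τ_n = o(n) and C_n = e^{o(n)}. Then for all n, m ∈ ℕ and u ∈ A^n with C_n Q_n(u) ≤ 1, Q{y : W_n(u,y) = m} ≥ (1/(n+τ_n)) Q_n(u) (1 - (n+τ_n)(1 - (1 - C_n Q_n(u))^{⌈(m-1)/(n+τ_n)⌉})). -/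
open MeasureTheory Filter Set
open scoped ENNReal

namespace RT

variable {A : Type*}

/-- The left shift on one-sided sequences. -/
def shift (x : ℕ → A) : ℕ → A := fun n => x (n + 1)

/-- The cylinder set of a finite word. -/
def cyl {n : ℕ} (u : Fin n → A) : Set (ℕ → A) := {x | ∀ i : Fin n, x i = u i}

/-- Cylinder probability `P_n(u) = P([u])`. -/
noncomputable def cylP [MeasurableSpace A] (P : Measure (ℕ → A)) {n : ℕ}
    (u : Fin n → A) : ℝ := (P (cyl u)).toReal

/-- Events depending only on the first `n` coordinates. -/
def FnSet (n : ℕ) (s : Set (ℕ → A)) : Prop :=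
  ∃ S : Set (Fin n → A), s = {x | (fun i : Fin n => x i) ∈ S}

/-- Waiting time `W_n(u,y)`, with value `⊤` if `u` never occurs in `y`. -/
noncomputable def waitTime {n : ℕ} (u : Fin n → A) (y : ℕ → A) : ℕ∞ :=
  sInf {m : ℕ∞ | ∃ j : ℕ, m = (j : ℕ∞) + 1 ∧ ∀ i : Fin n, y (j + (i : ℕ)) = u i}

/-- Return time `R_n(x)`. -/
noncomputable def returnTime (n : ℕ) (x : ℕ → A) : ℕ∞ :=
  sInf {m : ℕ∞ | ∃ k : ℕ, m = (k : ℕ∞) + 1 ∧ ∀ i : Fin n, x (k + 1 + (i : ℕ)) = x i}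

/-- Nonoverlapping return time `V_n(x)`. -/
noncomputable def vTime (n : ℕ) (x : ℕ → A) : ℕ∞ :=
  sInf {m : ℕ∞ | ∃ k : ℕ, m = (k : ℕ∞) + 1 ∧ ∀ i : Fin n, x (n + k + (i : ℕ)) = x i}

/-- Extended logarithm, with `elog 0 = ⊥` and `elog ⊤ = ⊤`. -/
noncomputable def elog (x : ℝ≥0∞) : EReal :=
  if x = 0 then ⊥ else if x = ⊤ then ⊤ else ((Real.log x.toReal : ℝ) : EReal)

/-- Periodic extension of a word of positive length. -/
def perExt {m : ℕ} (hm : 0 < m) (w : Fin m → A) : ℕ → A :=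
  fun i => w ⟨i % m, Nat.mod_lt i hm⟩

/-- The cylinder determined by the first `m` values of `f`. -/
def cylOf (m : ℕ) (f : ℕ → A) : Set (ℕ → A) := {x | ∀ i < m, x i = f i}

/-- Upper decoupling in event form. -/
def UDE [MeasurableSpace A] (P : Measure (ℕ → A)) (τ : ℕ → ℕ) (C : ℕ → ℝ) : Prop :=
  ∀ n : ℕ, 0 < n → ∀ s : Set (ℕ → A), FnSet n s → ∀ B : Set (ℕ → A), MeasurableSet B →
    (P (s ∩ (shift^[n + τ n]) ⁻¹' B)).toReal ≤ C n * (P s).toReal * (P B).toReal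

/-- Selective lower decoupling in event form. -/
def SLDE [MeasurableSpace A] (P : Measure (ℕ → A)) (τ : ℕ → ℕ) (C : ℕ → ℝ) : Prop :=
  ∀ n : ℕ, 0 < n → ∀ s : Set (ℕ → A), FnSet n s → ∀ B : Set (ℕ → A), MeasurableSet B →
    ∃ ℓ ≤ τ n, (C n)⁻¹ * (P s).toReal * (P B).toReal ≤ (P (s ∩ (shift^[n + ℓ]) ⁻¹' B)).toReal

/-- Upper decoupling (word form). -/
def UD [MeasurableSpace A] (P : Measure (ℕ → A)) (τ : ℕ → ℕ) (C : ℕ → ℝ) : Prop :=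
  ∀ (n m : ℕ), 0 < n → 0 < m → ∀ (u : Fin n → A) (v : Fin m → A) (ξ : Fin (τ n) → A),
    cylP P (Fin.append (Fin.append u ξ) v) ≤ C n * cylP P u * cylP P v

/-- Selective lower decoupling (word form). -/
def SLD [MeasurableSpace A] (P : Measure (ℕ → A)) (τ : ℕ → ℕ) (C : ℕ → ℝ) : Prop :=
  ∀ (n m : ℕ), 0 < n → 0 < m → ∀ (u : Fin n → A) (v : Fin m → A),
    ∃ ℓ ≤ τ n, ∃ ξ : Fin ℓ → A,
      (C n)⁻¹ * cylP P u * cylP P v ≤ cylP P (Fin.append (Fin.append u ξ) v)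

/-- Period of a finite word. -/
noncomputable def wordPeriod {m : ℕ} (u : Fin m → A) : ℕ :=
  sInf {p : ℕ | 1 ≤ p ∧ ∀ (i : ℕ) (h : i + p < m), u ⟨i, by omega⟩ = u ⟨i + p, h⟩}

/-- Legendre–Fenchel transform of an `EReal`-valued function on `ℝ`. -/
noncomputable def LF (f : ℝ → EReal) (α : ℝ) : EReal := ⨆ s : ℝ, ((α * s : ℝ) : EReal) - f s

/-- The waiting-time rate function built from `IQ`. -/
noncomputable def IW (IQ : ℝ → EReal) (s : ℝ) : EReal :=
  if s < 0 then ⊤ else ⨅ r : {r : ℝ // s ≤ r}, ((r.1 - s : ℝ) : EReal) + IQ r.1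

/-! Write `N = n + τ_n`, `p = Q_n(u)` and `E = m - 1 + N - 1`, so that `⌈(m-1)/N⌉ = E / N`.
By stationarity `u` occurs at position `E` with probability `p`. If it occurs at no position
`j < m - 1` as well, its first occurrence lies in `[m - 1, E]`, and each of these `N`
first-occurrence events has probability at most `Q{W = m}`, again by stationarity. Otherwise
there is an occurrence at some `j < m - 1`, say `j ≡ q mod N`. For each residue `q`, the
positions `q, q + N, …` up to `E - N` can be peeled off one at a time: the rest of the event lies
at least `N` further on, so (UD) shows that each removal keeps a fraction `≥ 1 - C_n p`. Hence `u`
occurs at `E` but at none of these positions with probability `≥ (1 - C_n p)^{E/N} p`, and summing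
over the `N` residues, `p ≤ N Q{W = m} + N (p - (1 - C_n p)^{E/N} p)`.

The σ-algebra on `A` is arbitrary, so cylinders need not be measurable and `Q_n(u)` is an outer
measure. Occurrences are therefore taken up to measurable atoms (`occAt`): these events are
measurable and have the same outer measure as the corresponding events for exact letters. -/

theorem _root_.mem_measurableAtom_pi {ι : Type*} {α : ι → Type*}
    [∀ i, MeasurableSpace (α i)] {x y : ∀ i, α i} (h : ∀ i, y i ∈ measurableAtom (x i)) :
    y ∈ measurableAtom x := by
  have hsymm : ∀ i, x i ∈ measurableAtom (y i) := fun i =>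
    measurableAtom_eq_of_mem (h i) ▸ mem_measurableAtom_self (x i)
  simp only [measurableAtom, mem_iInter]
  intro s hxs hs
  rw [MeasurableSpace.pi_eq_generateFrom_projections] at hs
  suffices x ∈ s ↔ y ∈ s from this.1 hxs
  clear hxs
  induction s, hs using MeasurableSpace.generateFrom_induction with
  | hC t ht =>
    obtain ⟨i, S, hS, rfl⟩ := ht
    exact ⟨fun hx => mem_of_mem_measurableAtom (h i) hS hx,
      fun hy => mem_of_mem_measurableAtom (hsymm i) hS hy⟩
  | empty => simp
  | compl t _ ht => exact not_congr ht
  | iUnion f _ hf => simp only [mem_iUnion]; exact exists_congr hf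

theorem _root_.MeasureTheory.measure_le_of_forall_mem_measurableAtom {α : Type*}
    [MeasurableSpace α] (μ : Measure α) {s t : Set α}
    (h : ∀ y ∈ t, ∃ x ∈ s, y ∈ measurableAtom x) : μ t ≤ μ s := by
  refine (measure_mono fun y hy => ?_).trans (measure_toMeasurable s).le
  obtain ⟨x, hxs, hyx⟩ := h y hy
  exact mem_of_mem_measurableAtom hyx (measurableSet_toMeasurable μ s)
    (subset_toMeasurable μ s hxs)

theorem shift_iterate_apply (y : ℕ → A) (b k : ℕ) : (shift^[b] y) k = y (k + b) := by
  induction b generalizing y with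
  | zero => rfl
  | succ b ih => rw [Function.iterate_succ_apply, ih]; rfl

section Occurrence

variable {n : ℕ} (u : Fin n → A)

def occAt [MeasurableSpace A] (j : ℕ) : Set (ℕ → A) :=
  {y | ∀ i : Fin n, y (j + i) ∈ measurableAtom (u i)}

def plant (j : ℕ) (y : ℕ → A) : ℕ → A :=
  fun k => if h : j ≤ k ∧ k < j + n then u ⟨k - j, by omega⟩ else y k

theorem plant_add (j : ℕ) (y : ℕ → A) (i : Fin n) : plant u j y (j + i) = u i := by
  simp [plant]

theorem waitTime_eq_succ {j : ℕ} {x : ℕ → A} (hocc : ∀ i : Fin n, x (j + i) = u i)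
    (hfirst : ∀ l < j, ¬ ∀ i : Fin n, x (l + i) = u i) : waitTime u x = j + 1 := by
  refine le_antisymm (sInf_le ⟨j, rfl, hocc⟩) (le_sInf ?_)
  rintro _ ⟨l, rfl, hl⟩
  have hjl : j ≤ l := not_lt.1 fun hlj => hfirst l hlj hl
  exact_mod_cast Nat.succ_le_succ hjl

variable [MeasurableSpace A]

theorem mem_measurableAtom_plant {j : ℕ} {y : ℕ → A} (hy : y ∈ occAt u j) :
    y ∈ measurableAtom (plant u j y) := by
  refine mem_measurableAtom_pi fun k => ?_
  by_cases hk : j ≤ k ∧ k < j + n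
  · have hyk := hy ⟨k - j, by omega⟩
    simp only [plant, dif_pos hk]
    rwa [Nat.add_sub_cancel' hk.1] at hyk
  · simp only [plant, dif_neg hk, mem_measurableAtom_self]

theorem cylP_eq_measureReal_occAt (Q : Measure (ℕ → A)) : cylP Q u = Q.real (occAt u 0) := by
  refine congrArg ENNReal.toReal (le_antisymm (measure_mono fun y hy i => ?_) ?_)
  · rw [Nat.zero_add, hy i]; exact mem_measurableAtom_self _
  · refine measure_le_of_forall_mem_measurableAtom Q fun y hy =>
      ⟨plant u 0 y, fun i => ?_, mem_measurableAtom_plant u hy⟩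
    simpa using plant_add u 0 y i

theorem fnSet_occAt_zero : FnSet n (occAt u 0) :=
  ⟨{v | ∀ i, v i ∈ measurableAtom (u i)}, by ext; simp [occAt]⟩

theorem shift_iterate_mem_occAt {y : ℕ → A} (a b : ℕ) :
    shift^[b] y ∈ occAt u a ↔ y ∈ occAt u (a + b) := by
  simp only [occAt, mem_ofPred_eq, shift_iterate_apply, Nat.add_right_comm]

theorem preimage_shift_iterate_occAt (a b : ℕ) :
    shift^[b] ⁻¹' occAt u a = occAt u (a + b) :=
  ext fun _ => shift_iterate_mem_occAt u a b

variable [Countable A]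

theorem measurableSet_occAt (j : ℕ) : MeasurableSet (occAt u j) := by
  simp only [occAt, ofPred_forall]
  exact .iInter fun i => measurable_pi_apply _ (.measurableAtom_of_countable _)

theorem mem_occAt_of_mem_measurableAtom {j : ℕ} {x y : ℕ → A}
    (hx : ∀ i : Fin n, x (j + i) = u i) (hy : y ∈ measurableAtom x) : y ∈ occAt u j :=
  mem_of_mem_measurableAtom hy (measurableSet_occAt u j)
    fun i => hx i ▸ mem_measurableAtom_self _

theorem measureReal_occAt {Q : Measure (ℕ → A)} (hinv : MeasurePreserving shift Q Q) (j : ℕ) :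
    Q.real (occAt u j) = Q.real (occAt u 0) := by
  rw [← (hinv.iterate j).measureReal_preimage (measurableSet_occAt u 0).nullMeasurableSet,
    preimage_shift_iterate_occAt, Nat.zero_add]

end Occurrence

section FirstOccurrence

variable [MeasurableSpace A] {n : ℕ} (u : Fin n → A)

def noOccBefore (j : ℕ) : Set (ℕ → A) := ⋂ l < j, (occAt u l)ᶜ

def firstOccAt (j : ℕ) : Set (ℕ → A) := occAt u j ∩ noOccBefore u j

theorem occAt_add_inter_noOccBefore_subset (j k : ℕ) :
    occAt u (j + k) ∩ noOccBefore u j ⊆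
      ⋃ i ∈ Finset.range (k + 1), firstOccAt u (j + i) := by
  classical
  rintro y ⟨hy, hnone⟩
  have hex : ∃ l, y ∈ occAt u l := ⟨j + k, hy⟩
  have hjl : j ≤ Nat.find hex := not_lt.1 fun h => mem_iInter₂.1 hnone _ h (Nat.find_spec hex)
  have hlk : Nat.find hex ≤ j + k := Nat.find_min' hex hy
  refine mem_iUnion₂.2 ⟨Nat.find hex - j, Finset.mem_range.2 (by omega), ?_⟩
  rw [Nat.add_sub_cancel' hjl]
  exact ⟨Nat.find_spec hex, mem_iInter₂.2 fun l hl => Nat.find_min hex hl⟩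

variable [Countable A] (Q : Measure (ℕ → A))

theorem measurableSet_noOccBefore (j : ℕ) : MeasurableSet (noOccBefore u j) :=
  .iInter fun _ => .iInter fun _ => (measurableSet_occAt u _).compl

theorem measurableSet_firstOccAt (j : ℕ) : MeasurableSet (firstOccAt u j) :=
  (measurableSet_occAt u j).inter (measurableSet_noOccBefore u j)

theorem measure_firstOccAt_le (j : ℕ) :
    Q (firstOccAt u j) ≤ Q {y | waitTime u y = j + 1} := by
  refine measure_le_of_forall_mem_measurableAtom Q fun y ⟨hy, hfirst⟩ =>
    ⟨plant u j y, waitTime_eq_succ u (plant_add u j y) fun l hl hocc => ?_,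
      mem_measurableAtom_plant u hy⟩
  exact mem_iInter₂.1 hfirst l hl
    (mem_occAt_of_mem_measurableAtom u hocc (mem_measurableAtom_plant u hy))

variable {Q} [IsFiniteMeasure Q] (hinv : MeasurePreserving shift Q Q)
include hinv

theorem measureReal_firstOccAt_add_le (j i : ℕ) :
    Q.real (firstOccAt u (j + i)) ≤ Q.real (firstOccAt u j) := by
  rw [← (hinv.iterate i).measureReal_preimage (measurableSet_firstOccAt u j).nullMeasurableSet]
  refine measureReal_mono fun y ⟨hy, hfirst⟩ => ⟨?_, ?_⟩
  · exact (shift_iterate_mem_occAt u j i).2 hy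
  · exact mem_iInter₂.2 fun l hl hocc => mem_iInter₂.1 hfirst (l + i) (by omega)
      ((shift_iterate_mem_occAt u l i).1 hocc)

theorem measureReal_occAt_add_inter_noOccBefore_le (j k : ℕ) :
    Q.real (occAt u (j + k) ∩ noOccBefore u j) ≤
      (k + 1) * Q.real {y | waitTime u y = j + 1} := by
  have hfirst : ∀ i, Q.real (firstOccAt u (j + i)) ≤ Q.real {y | waitTime u y = j + 1} :=
    fun i => (measureReal_firstOccAt_add_le u hinv j i).trans
      (ENNReal.toReal_mono (measure_ne_top Q _) (measure_firstOccAt_le u Q j))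
  calc Q.real (occAt u (j + k) ∩ noOccBefore u j)
      ≤ ∑ i ∈ Finset.range (k + 1), Q.real (firstOccAt u (j + i)) :=
        (measureReal_mono (occAt_add_inter_noOccBefore_subset u j k) (measure_ne_top Q _)).trans
          (measureReal_biUnion_finset_le _ _)
    _ ≤ (k + 1) * Q.real {y | waitTime u y = j + 1} := by
        refine (Finset.sum_le_sum fun i _ => hfirst i).trans_eq ?_
        simp

end FirstOccurrence

section Decoupling

variable [MeasurableSpace A] {n : ℕ} (u : Fin n → A)

def avoidProgression (N k d : ℕ) : Set (ℕ → A) :=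
  occAt u (k * N + d) ∩ ⋂ t < k, (occAt u (t * N))ᶜ

theorem avoidProgression_succ (N k d : ℕ) :
    avoidProgression u N (k + 1) d = shift^[N] ⁻¹' avoidProgression u N k d \ occAt u 0 := by
  ext y
  simp only [avoidProgression, Set.mem_sdiff, mem_inter_iff, mem_preimage, mem_iInter₂,
    mem_compl_iff, shift_iterate_mem_occAt, Nat.forall_lt_succ_left, Nat.zero_mul, Nat.succ_mul,
    Nat.add_right_comm _ N]
  tauto

/-- An occurrence at `j + (N - 1)` preceded by one at some `l < j` is excluded from the
progression of residue `l % N`. -/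
theorem occAt_subset_noOccBefore_union {N : ℕ} (hN : 0 < N) (j : ℕ) :
    occAt u (j + (N - 1)) ⊆ (occAt u (j + (N - 1)) ∩ noOccBefore u j) ∪
      ⋃ q ∈ Finset.range N, (occAt u (j + (N - 1)) \ shift^[q] ⁻¹'
        avoidProgression u N ((j + (N - 1) - q) / N) ((j + (N - 1) - q) % N)) := by
  intro y hy
  by_cases hnone : y ∈ noOccBefore u j
  · exact .inl ⟨hy, hnone⟩
  obtain ⟨l, hl, hocc⟩ : ∃ l < j, y ∈ occAt u l := by simpa [noOccBefore] using hnone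
  refine .inr (mem_iUnion₂.2 ⟨l % N, Finset.mem_range.2 (Nat.mod_lt l hN), hy, ?_⟩)
  rintro ⟨-, hfree⟩
  have hlt : l / N < (j + (N - 1) - l % N) / N := by
    rw [Nat.lt_iff_add_one_le, Nat.le_div_iff_mul_le hN, Nat.add_one_mul]
    have := Nat.div_add_mod' l N
    omega
  refine mem_iInter₂.1 hfree (l / N) hlt ?_
  rwa [shift_iterate_mem_occAt, Nat.div_add_mod']

variable [Countable A]

theorem measurableSet_avoidProgression (N k d : ℕ) :
    MeasurableSet (avoidProgression u N k d) :=
  (measurableSet_occAt u _).inter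
    (.iInter fun _ => .iInter fun _ => (measurableSet_occAt u _).compl)

variable {Q : Measure (ℕ → A)} [IsFiniteMeasure Q] (hinv : MeasurePreserving shift Q Q)
  {τ : ℕ → ℕ} {C : ℕ → ℝ} (hUD : UDE Q τ C) (hn : 0 < n)
include hinv hUD hn

theorem le_measureReal_preimage_shift_sdiff_occAt {B : Set (ℕ → A)} (hB : MeasurableSet B) :
    (1 - C n * Q.real (occAt u 0)) * Q.real B ≤
      Q.real (shift^[n + τ n] ⁻¹' B \ occAt u 0) := by
  have hdecouple := hUD n hn _ (fnSet_occAt_zero u) B hB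
  have hsplit := measureReal_inter_add_sdiff (μ := Q) (s := shift^[n + τ n] ⁻¹' B)
    (measurableSet_occAt u 0)
  rw [(hinv.iterate _).measureReal_preimage hB.nullMeasurableSet, inter_comm] at hsplit
  change Q.real _ ≤ C n * Q.real _ * Q.real B at hdecouple
  linarith

theorem pow_mul_le_measureReal_avoidProgression (hc : 0 ≤ 1 - C n * Q.real (occAt u 0))
    (k d : ℕ) : (1 - C n * Q.real (occAt u 0)) ^ k * Q.real (occAt u 0) ≤
      Q.real (avoidProgression u (n + τ n) k d) := by
  induction k with
  | zero => simp [avoidProgression, measureReal_occAt u hinv]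
  | succ k ih =>
    rw [avoidProgression_succ, pow_succ', mul_assoc]
    exact (mul_le_mul_of_nonneg_left ih hc).trans
      (le_measureReal_preimage_shift_sdiff_occAt u hinv hUD hn
        (measurableSet_avoidProgression u _ k d))

theorem sub_le_measureReal_occAt_inter_noOccBefore (hC : 0 ≤ C n)
    (hCp : C n * Q.real (occAt u 0) ≤ 1) (j : ℕ) :
    Q.real (occAt u 0) - (n + τ n) * (Q.real (occAt u 0) -
        (1 - C n * Q.real (occAt u 0)) ^ ((j + (n + τ n - 1)) / (n + τ n)) * Q.real (occAt u 0))
      ≤ Q.real (occAt u (j + (n + τ n - 1)) ∩ noOccBefore u j) := by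
  set N := n + τ n
  set E := j + (N - 1)
  set p := Q.real (occAt u 0)
  set c := 1 - C n * p
  have hN : 0 < N := by omega
  have hc0 : 0 ≤ c := by linarith
  have hc1 : c ≤ 1 := by nlinarith [measureReal_nonneg (μ := Q) (s := occAt u 0)]
  set Z : ℕ → Set (ℕ → A) := fun q =>
    shift^[q] ⁻¹' avoidProgression u N ((E - q) / N) ((E - q) % N)
  have hZ : ∀ q ∈ Finset.range N, Q.real (occAt u E \ Z q) ≤ p - c ^ (E / N) * p := by
    intro q hq
    have hqE : q ≤ E := by rw [Finset.mem_range] at hq; omega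
    have hsub : Z q ⊆ occAt u E := fun y hy => by
      have hyE := (shift_iterate_mem_occAt u _ q).1 hy.1
      rwa [Nat.div_add_mod', Nat.sub_add_cancel hqE] at hyE
    have hmeas := measurableSet_avoidProgression u N ((E - q) / N) ((E - q) % N)
    rw [measureReal_sdiff hsub (hmeas.preimage (hinv.measurable.iterate q)),
      measureReal_occAt u hinv, (hinv.iterate q).measureReal_preimage hmeas.nullMeasurableSet]
    have hpeel := pow_mul_le_measureReal_avoidProgression u hinv hUD hn hc0
      ((E - q) / N) ((E - q) % N)
    have hpow : c ^ (E / N) * p ≤ c ^ ((E - q) / N) * p :=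
      mul_le_mul_of_nonneg_right
        (pow_le_pow_of_le_one hc0 hc1 (Nat.div_le_div_right (Nat.sub_le E q))) measureReal_nonneg
    linarith
  have hcover : p ≤ Q.real (occAt u E ∩ noOccBefore u j) +
      ∑ q ∈ Finset.range N, Q.real (occAt u E \ Z q) :=
    (measureReal_occAt u hinv E).symm.le.trans <|
      (measureReal_mono (occAt_subset_noOccBefore_union u hN j)).trans <|
        (measureReal_union_le _ _).trans (add_le_add_right (measureReal_biUnion_finset_le _ _) _)
  have hsum := Finset.sum_le_sum hZ
  rw [Finset.sum_const, Finset.card_range, nsmul_eq_mul,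
    show (N : ℝ) = n + τ n from Nat.cast_add n (τ n)] at hsum
  linarith

end Decoupling

theorem stmt2_general {A : Type*} [Fintype A] [MeasurableSpace A]
    (Q : Measure (ℕ → A)) [IsProbabilityMeasure Q]
    (hinv : MeasurePreserving (shift (A := A)) Q Q)
    (τ : ℕ → ℕ) (C : ℕ → ℝ)
    (hC1 : ∀ n, 1 ≤ C n)
    (hUD : UDE Q τ C) :
    ∀ n : ℕ, 0 < n → ∀ m : ℕ, 0 < m → ∀ u : Fin n → A, C n * cylP Q u ≤ 1 →
      (1 / ((n : ℝ) + τ n)) * cylP Q u *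
          (1 - ((n : ℝ) + τ n) *
            (1 - (1 - C n * cylP Q u) ^ ((m - 1 + (n + τ n) - 1) / (n + τ n))))
        ≤ (Q {y | waitTime u y = (m : ℕ∞)}).toReal := by
  intro n hn m hm u hCu
  rw [cylP_eq_measureReal_occAt] at hCu ⊢
  have hlower := sub_le_measureReal_occAt_inter_noOccBefore u hinv hUD hn
    (zero_le_one.trans (hC1 n)) hCu (m - 1)
  have hupper := measureReal_occAt_add_inter_noOccBefore_le u hinv (m - 1) (n + τ n - 1)
  rw [show ((m - 1 : ℕ) : ℕ∞) + 1 = m by norm_cast; omega,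
    show ((n + τ n - 1 : ℕ) : ℝ) + 1 = n + τ n by norm_cast; omega] at hupper
  rw [show m - 1 + (n + τ n) - 1 = m - 1 + (n + τ n - 1) by omega]
  change _ ≤ Q.real _
  rw [one_div, mul_assoc, inv_mul_le_iff₀ (by positivity)]
  linarith

/-- Under upper decoupling in event form (gaps `τ_n = o(n)`,
constants `C_n = e^{o(n)}`, `C_n ≥ 1`), for all `n, m ≥ 1` and `u ∈ A^n` with
`C_n Q_n(u) ≤ 1`:
`Q{y : W_n(u,y) = m} ≥ (1/(n+τ_n)) Q_n(u) (1 - (n+τ_n)(1 - (1 - C_n Q_n(u))^⌈(m-1)/(n+τ_n)⌉))`. -/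
theorem stmt2 {A : Type*} [Fintype A] [MeasurableSpace A]
    (Q : Measure (ℕ → A)) [IsProbabilityMeasure Q]
    (hinv : MeasurePreserving (shift (A := A)) Q Q)
    (τ : ℕ → ℕ) (C : ℕ → ℝ)
    (hC1 : ∀ n, 1 ≤ C n)
    (hτo : Tendsto (fun n : ℕ => (τ n : ℝ) / n) atTop (nhds 0))
    (hCo : Tendsto (fun n : ℕ => Real.log (C n) / n) atTop (nhds 0))
    (hUD : UDE Q τ C) :
    ∀ n : ℕ, 0 < n → ∀ m : ℕ, 0 < m → ∀ u : Fin n → A, C n * cylP Q u ≤ 1 →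
      (1 / ((n : ℝ) + τ n)) * cylP Q u *
          (1 - ((n : ℝ) + τ n) *
            (1 - (1 - C n * cylP Q u) ^ ((m - 1 + (n + τ n) - 1) / (n + τ n))))
        ≤ (Q {y | waitTime u y = (m : ℕ∞)}).toReal :=
  stmt2_general Q hinv τ C hC1 hUD

end RT
end

section
/- Let Q be a shift-invariant probability measure satisfying SLD (with sequences τ_n = o(n), C_n = e^{o(n)}, C_n ≥ C_1 > 1). Then for every α > 0 there is a sequence κ_{α,n} = e^{o(n)} such that for every n ∈ ℕ and every u in the support of Q_n, ∫ W_n(u,y)^α dQ(y) ≤ κ_{α,n} Q_n(u)^{-α}. In particular, W_n(u,·) has finite moments of all positive orders whenever Q_n(u) > 0. -/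
open MeasureTheory Filter Set
open scoped ENNReal

namespace RT

variable {A : Type*}

section AuxSeries

noncomputable def Kc (α : ℝ) : ℝ := (2*α/Real.exp 1) ^ α * (4 * Real.exp 1)

lemma Kc_pos {α : ℝ} (hα : 0 < α) : 0 < Kc α := by
  have h1 : 0 < 2*α/Real.exp 1 := by positivity
  have h2 := Real.rpow_pos_of_pos h1 α
  have : (0:ℝ) < 4 * Real.exp 1 := by positivity
  exact mul_pos h2 this

lemma ann_nonneg {α : ℝ} (hα : 0 < α) (t : ℕ) : 0 ≤ ((t:ℝ)+1) ^ α - (t:ℝ) ^ α := by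
  have := Real.rpow_le_rpow (Nat.cast_nonneg t) (show (t:ℝ) ≤ (t:ℝ)+1 by linarith) hα.le
  linarith

lemma rpow_le_exp_aux {α lam x : ℝ} (hα : 0 < α) (hl : 0 < lam) (hx : 0 < x) :
    x ^ α ≤ (α / lam) ^ α * Real.exp (-α) * Real.exp (lam * x) := by
  have hal : 0 < α / lam := by positivity
  have hxl : 0 < x * lam / α := by positivity
  have hlog : Real.log (x * lam / α) ≤ x * lam / α - 1 := Real.log_le_sub_one_of_pos hxl
  have hsplit : Real.log (x * lam / α) = Real.log x - Real.log (α / lam) := by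
    rw [show x * lam / α = x / (α / lam) by field_simp]
    rw [Real.log_div hx.ne' hal.ne']
  have hkey : α * Real.log x ≤ α * Real.log (α / lam) + (-α) + lam * x := by
    have h2 : Real.log x ≤ Real.log (α / lam) + x * lam / α - 1 := by
      rw [hsplit] at hlog; linarith
    have h3 : α * Real.log x ≤ α * (Real.log (α / lam) + x * lam / α - 1) :=
      mul_le_mul_of_nonneg_left h2 hα.le
    have h4 : α * (x * lam / α) = lam * x := by field_simp
    nlinarith [h3, h4]
  calc x ^ α = Real.exp (Real.log x * α) := by rw [Real.rpow_def_of_pos hx]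
    _ ≤ Real.exp (α * Real.log (α / lam) + (-α) + lam * x) := by
        apply Real.exp_le_exp.mpr; linarith
    _ = (α / lam) ^ α * Real.exp (-α) * Real.exp (lam * x) := by
        rw [Real.rpow_def_of_pos hal, ← Real.exp_add, ← Real.exp_add]
        ring_nf

lemma S_summable_and_bound {α r : ℝ} (hα : 0 < α) (hr0 : 0 ≤ r) (hr1 : r < 1) :
    Summable (fun t : ℕ => ((t:ℝ)+1) ^ α * r ^ t) ∧
    ∑' t : ℕ, ((t:ℝ)+1) ^ α * r ^ t ≤ Kc α * (1-r) ^ (-(α+1)) := by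
  set lam : ℝ := (1-r)/2 with hlam_def
  have hlam : 0 < lam := by simp only [hlam_def]; linarith
  have hlam_half : lam ≤ 1/2 := by simp only [hlam_def]; linarith
  set c : ℝ := (α / lam) ^ α * Real.exp (-α) with hc_def
  have hc : 0 < c := by
    have := Real.rpow_pos_of_pos (show (0:ℝ) < α / lam by positivity) α
    positivity
  set ρ : ℝ := r * Real.exp lam with hρ_def
  have hρ0 : 0 ≤ ρ := by positivity
  have hρle : ρ ≤ Real.exp (-lam) := by
    have h1 : r ≤ Real.exp (-(2*lam)) := by
      have := Real.add_one_le_exp (-(2*lam))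
      simp only [hlam_def] at *; linarith
    calc ρ = r * Real.exp lam := rfl
      _ ≤ Real.exp (-(2*lam)) * Real.exp lam := by
          apply mul_le_mul_of_nonneg_right h1 (Real.exp_pos _).le
      _ = Real.exp (-lam) := by rw [← Real.exp_add]; ring_nf
  have hρ1 : ρ < 1 := lt_of_le_of_lt hρle (Real.exp_lt_one_iff.mpr (by linarith))
  have hpt : ∀ t : ℕ, ((t:ℝ)+1) ^ α * r ^ t ≤ (c * Real.exp lam) * ρ ^ t := by
    intro t
    have h1 : ((t:ℝ)+1) ^ α ≤ c * Real.exp (lam * ((t:ℝ)+1)) := by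
      have := rpow_le_exp_aux hα hlam (show (0:ℝ) < (t:ℝ)+1 by positivity)
      simpa [hc_def, mul_assoc] using this
    have h2 : Real.exp (lam * ((t:ℝ)+1)) = Real.exp lam ^ t * Real.exp lam := by
      rw [← Real.exp_nat_mul, ← Real.exp_add]; ring_nf
    have h3 : ((t:ℝ)+1) ^ α * r ^ t ≤ c * (Real.exp lam ^ t * Real.exp lam) * r ^ t := by
      apply mul_le_mul_of_nonneg_right _ (pow_nonneg hr0 t)
      rw [← h2]; exact h1
    calc ((t:ℝ)+1) ^ α * r ^ t ≤ c * (Real.exp lam ^ t * Real.exp lam) * r ^ t := h3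
      _ = (c * Real.exp lam) * ρ ^ t := by rw [hρ_def, mul_pow]; ring
  have hgeom : Summable (fun t : ℕ => (c * Real.exp lam) * ρ ^ t) :=
    (summable_geometric_of_lt_one hρ0 hρ1).mul_left _
  have hnn : ∀ t : ℕ, 0 ≤ ((t:ℝ)+1) ^ α * r ^ t := by
    intro t
    have : (0:ℝ) ≤ ((t:ℝ)+1) ^ α := Real.rpow_nonneg (by positivity) α
    positivity
  have hsum : Summable (fun t : ℕ => ((t:ℝ)+1) ^ α * r ^ t) :=
    Summable.of_nonneg_of_le hnn hpt hgeom
  refine ⟨hsum, ?_⟩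
  have h1 : ∑' t : ℕ, ((t:ℝ)+1) ^ α * r ^ t ≤ (c * Real.exp lam) * (1-ρ)⁻¹ := by
    calc ∑' t : ℕ, ((t:ℝ)+1) ^ α * r ^ t
        ≤ ∑' t : ℕ, (c * Real.exp lam) * ρ ^ t := Summable.tsum_le_tsum hpt hsum hgeom
      _ = (c * Real.exp lam) * ∑' t : ℕ, ρ ^ t := tsum_mul_left
      _ = (c * Real.exp lam) * (1-ρ)⁻¹ := by rw [tsum_geometric_of_lt_one hρ0 hρ1]
  have hinv : (1-ρ)⁻¹ ≤ 2 / lam := by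
    have h2 : Real.exp (-lam) ≤ 1/(1+lam) := by
      rw [Real.exp_neg, one_div]
      exact inv_anti₀ (by positivity) (by linarith [Real.add_one_le_exp lam])
    have h3 : lam/2 ≤ 1 - ρ := by
      have h6 : ρ ≤ 1/(1+lam) := le_trans hρle h2
      have h4 : 1 - 1/(1+lam) = lam/(1+lam) := by field_simp; ring
      have h5 : lam/(1+lam) ≥ lam/2 := by
        apply div_le_div_of_nonneg_left hlam.le (by linarith) (by linarith)
      linarith
    rw [div_eq_mul_inv]
    calc (1-ρ)⁻¹ ≤ (lam/2)⁻¹ := by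
          exact inv_anti₀ (by positivity) h3
      _ = 2 * lam⁻¹ := by rw [div_eq_mul_inv, mul_inv, inv_inv]; ring
  have hexp : Real.exp lam ≤ Real.exp 1 := Real.exp_le_exp.mpr (by linarith)
  have h2 : ∑' t : ℕ, ((t:ℝ)+1) ^ α * r ^ t ≤ c * Real.exp 1 * (2/lam) := by
    calc ∑' t : ℕ, ((t:ℝ)+1) ^ α * r ^ t ≤ (c * Real.exp lam) * (1-ρ)⁻¹ := h1
      _ ≤ (c * Real.exp 1) * (2/lam) := by
          apply mul_le_mul (mul_le_mul_of_nonneg_left hexp hc.le) hinv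
          · exact inv_nonneg.mpr (by linarith)
          · positivity
  have hr1' : 0 < 1 - r := by linarith
  have hc_eq : c = (2*α/Real.exp 1) ^ α * (1-r) ^ (-α) := by
    have hαl : α / lam = 2*α/(1-r) := by
      rw [hlam_def]; field_simp
    rw [hc_def, hαl]
    have e1 : (2*α/(1-r)) ^ α = (2*α) ^ α * ((1-r) ^ α)⁻¹ := by
      rw [Real.div_rpow (by positivity) hr1'.le, div_eq_mul_inv]
    have e2 : (2*α/Real.exp 1) ^ α = (2*α) ^ α * (Real.exp α)⁻¹ := by
      rw [Real.div_rpow (by positivity) (Real.exp_pos 1).le, div_eq_mul_inv,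
        ← Real.exp_one_rpow α]
    have e3 : (1-r) ^ (-α) = ((1-r) ^ α)⁻¹ := Real.rpow_neg hr1'.le α
    rw [e1, e2, e3, Real.exp_neg]
    ring
  have hfinal : c * Real.exp 1 * (2/lam) = Kc α * (1-r) ^ (-(α+1)) := by
    rw [hc_eq, Kc]
    have e4 : (2:ℝ)/lam = 4 / (1-r) := by rw [hlam_def]; field_simp; norm_num
    have e5 : (1-r) ^ (-(α+1)) = (1-r) ^ (-α) * (1-r)⁻¹ := by
      rw [show -(α+1) = -α + (-1) by ring, Real.rpow_add hr1', Real.rpow_neg_one]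
    rw [e4, e5, div_eq_mul_inv]
    ring
  linarith [h2, hfinal.le]

lemma abel_identity {α r : ℝ} (hα : 0 < α) (hr0 : 0 ≤ r) (hr1 : r < 1) :
    ∑' t : ℕ, (((t:ℝ)+1) ^ α - (t:ℝ) ^ α) * r ^ t
      = (1-r) * ∑' t : ℕ, ((t:ℝ)+1) ^ α * r ^ t := by
  obtain ⟨hS, -⟩ := S_summable_and_bound hα hr0 hr1
  have hle : ∀ t : ℕ, (t:ℝ) ^ α * r ^ t ≤ ((t:ℝ)+1) ^ α * r ^ t := by
    intro t
    apply mul_le_mul_of_nonneg_right _ (pow_nonneg hr0 t)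
    exact Real.rpow_le_rpow (Nat.cast_nonneg t) (by linarith) hα.le
  have hnn : ∀ t : ℕ, 0 ≤ (t:ℝ) ^ α * r ^ t := by
    intro t
    have : (0:ℝ) ≤ (t:ℝ) ^ α := Real.rpow_nonneg (Nat.cast_nonneg t) α
    positivity
  have hS2 : Summable (fun t : ℕ => (t:ℝ) ^ α * r ^ t) :=
    Summable.of_nonneg_of_le hnn hle hS
  have hsplit : ∀ t : ℕ, (((t:ℝ)+1) ^ α - (t:ℝ) ^ α) * r ^ t
      = ((t:ℝ)+1) ^ α * r ^ t - (t:ℝ) ^ α * r ^ t := fun t => by ring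
  have h1 : ∑' t : ℕ, (((t:ℝ)+1) ^ α - (t:ℝ) ^ α) * r ^ t
      = (∑' t : ℕ, ((t:ℝ)+1) ^ α * r ^ t) - ∑' t : ℕ, (t:ℝ) ^ α * r ^ t := by
    simp_rw [hsplit]
    exact Summable.tsum_sub hS hS2
  have h2 : ∑' t : ℕ, (t:ℝ) ^ α * r ^ t = r * ∑' t : ℕ, ((t:ℝ)+1) ^ α * r ^ t := by
    rw [Summable.tsum_eq_zero_add hS2]
    have h0 : ((0:ℕ):ℝ) ^ α * r ^ (0:ℕ) = 0 := by
      simp [Real.zero_rpow hα.ne']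
    rw [h0, zero_add]
    have h3 : ∀ t : ℕ, (((t:ℕ)+1:ℕ):ℝ) ^ α * r ^ (t+1) = r * (((t:ℝ)+1) ^ α * r ^ t) := by
      intro t
      push_cast
      rw [pow_succ]
      ring
    simp_rw [h3]
    exact tsum_mul_left
  rw [h1, h2]
  ring

lemma tail_series_bound {α q : ℝ} {M' : ℕ} (hM : 1 ≤ M') (hα : 0 < α)
    (hq0 : 0 < q) (hq1 : q < 1) :
    Summable (fun t : ℕ => (((t:ℝ)+1) ^ α - (t:ℝ) ^ α) * q ^ (t / M')) ∧
    ∑' t : ℕ, (((t:ℝ)+1) ^ α - (t:ℝ) ^ α) * q ^ (t / M')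
      ≤ q⁻¹ * Kc α * (M':ℝ) ^ α * (1-q) ^ (-α) := by
  have hM0 : 0 < M' := hM
  have hMR : (0:ℝ) < (M':ℝ) := by exact_mod_cast hM0
  set r : ℝ := q ^ ((M':ℝ)⁻¹) with hr_def
  have hr0 : 0 < r := Real.rpow_pos_of_pos hq0 _
  have hr1 : r < 1 := Real.rpow_lt_one hq0.le hq1 (by positivity)
  have hrM : r ^ (M' : ℕ) = q := by
    rw [hr_def, ← Real.rpow_natCast (q ^ ((M':ℝ)⁻¹)) M', ← Real.rpow_mul hq0.le]
    rw [inv_mul_cancel₀ hMR.ne', Real.rpow_one]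
  obtain ⟨hS, hSb⟩ := S_summable_and_bound hα hr0.le hr1
  have hkey : ∀ t : ℕ, q ^ (t / M') ≤ q⁻¹ * r ^ t := by
    intro t
    have h1 : t ≤ M' * (t / M') + M' := by
      have h2 := Nat.div_add_mod t M'
      have h3 := Nat.mod_lt t hM0
      omega
    have h2 : r ^ (M' * (t / M') + M') ≤ r ^ t :=
      pow_le_pow_of_le_one hr0.le hr1.le h1
    have h3 : q ^ (t / M') * q = r ^ (M' * (t / M') + M') := by
      rw [pow_add, pow_mul, hrM]
    have h4 : q ^ (t / M') * q ≤ r ^ t := by rw [h3]; exact h2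
    have h5 : q ^ (t / M') ≤ r ^ t / q := (le_div_iff₀ hq0).mpr h4
    have h6 : r ^ t / q = q⁻¹ * r ^ t := div_eq_inv_mul _ _
    linarith [h5, h6.le]
  have hann : ∀ t : ℕ, 0 ≤ ((t:ℝ)+1) ^ α - (t:ℝ) ^ α := ann_nonneg hα
  have habel := abel_identity hα hr0.le hr1
  have hle2 : ∀ t : ℕ, (((t:ℝ)+1) ^ α - (t:ℝ) ^ α) * r ^ t ≤ ((t:ℝ)+1) ^ α * r ^ t := by
    intro t
    apply mul_le_mul_of_nonneg_right _ (pow_nonneg hr0.le t)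
    have : (0:ℝ) ≤ (t:ℝ) ^ α := Real.rpow_nonneg (Nat.cast_nonneg t) α
    linarith
  have hnn2 : ∀ t : ℕ, 0 ≤ (((t:ℝ)+1) ^ α - (t:ℝ) ^ α) * r ^ t := fun t =>
    mul_nonneg (hann t) (pow_nonneg hr0.le t)
  have hSa : Summable (fun t : ℕ => (((t:ℝ)+1) ^ α - (t:ℝ) ^ α) * r ^ t) :=
    Summable.of_nonneg_of_le hnn2 hle2 hS
  have hpt : ∀ t : ℕ, (((t:ℝ)+1) ^ α - (t:ℝ) ^ α) * q ^ (t / M')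
      ≤ q⁻¹ * ((((t:ℝ)+1) ^ α - (t:ℝ) ^ α) * r ^ t) := by
    intro t
    have h7 := mul_le_mul_of_nonneg_left (hkey t) (hann t)
    calc (((t:ℝ)+1) ^ α - (t:ℝ) ^ α) * q ^ (t / M')
        ≤ (((t:ℝ)+1) ^ α - (t:ℝ) ^ α) * (q⁻¹ * r ^ t) := h7
      _ = q⁻¹ * ((((t:ℝ)+1) ^ α - (t:ℝ) ^ α) * r ^ t) := by ring
  have hnn3 : ∀ t : ℕ, 0 ≤ (((t:ℝ)+1) ^ α - (t:ℝ) ^ α) * q ^ (t / M') := fun t =>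
    mul_nonneg (hann t) (pow_nonneg hq0.le _)
  have hsummain : Summable (fun t : ℕ => (((t:ℝ)+1) ^ α - (t:ℝ) ^ α) * q ^ (t / M')) :=
    Summable.of_nonneg_of_le hnn3 hpt (hSa.mul_left _)
  refine ⟨hsummain, ?_⟩
  have h4 : ∑' t : ℕ, (((t:ℝ)+1) ^ α - (t:ℝ) ^ α) * q ^ (t / M')
      ≤ q⁻¹ * ((1-r) * ∑' t : ℕ, ((t:ℝ)+1) ^ α * r ^ t) := by
    calc ∑' t : ℕ, (((t:ℝ)+1) ^ α - (t:ℝ) ^ α) * q ^ (t / M')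
        ≤ ∑' t : ℕ, q⁻¹ * ((((t:ℝ)+1) ^ α - (t:ℝ) ^ α) * r ^ t) :=
          Summable.tsum_le_tsum hpt hsummain (hSa.mul_left _)
      _ = q⁻¹ * ∑' t : ℕ, (((t:ℝ)+1) ^ α - (t:ℝ) ^ α) * r ^ t := tsum_mul_left
      _ = q⁻¹ * ((1-r) * ∑' t : ℕ, ((t:ℝ)+1) ^ α * r ^ t) := by rw [habel]
  have hr1' : 0 < 1 - r := by linarith
  have hq1' : 0 < 1 - q := by linarith
  have h5 : (1-r) * ∑' t : ℕ, ((t:ℝ)+1) ^ α * r ^ t ≤ Kc α * (1-r) ^ (-α) := by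
    calc (1-r) * ∑' t : ℕ, ((t:ℝ)+1) ^ α * r ^ t
        ≤ (1-r) * (Kc α * (1-r) ^ (-(α+1))) := by
          apply mul_le_mul_of_nonneg_left hSb hr1'.le
      _ = Kc α * ((1-r) ^ (1:ℝ) * (1-r) ^ (-(α+1))) := by
          rw [Real.rpow_one]; ring
      _ = Kc α * (1-r) ^ (-α) := by
          rw [← Real.rpow_add hr1', show (1:ℝ) + -(α+1) = -α by ring]
  have hber : 1 - q ≤ (M':ℝ) * (1-r) := by
    have h8 := one_add_mul_le_pow (show (-2:ℝ) ≤ r - 1 by linarith) M'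
    rw [show (1:ℝ) + (r-1) = r by ring] at h8
    rw [hrM] at h8
    nlinarith
  have h6 : (1-r) ^ (-α) ≤ (M':ℝ) ^ α * (1-q) ^ (-α) := by
    have e1 : ((M':ℝ) * (1-q)⁻¹) ^ α = (M':ℝ) ^ α * (1-q) ^ (-α) := by
      rw [Real.mul_rpow hMR.le (inv_nonneg.mpr hq1'.le), Real.inv_rpow hq1'.le,
        ← Real.rpow_neg hq1'.le]
    have e2 : (1-r) ^ (-α) = ((1-r)⁻¹) ^ α := by
      rw [Real.inv_rpow hr1'.le, ← Real.rpow_neg hr1'.le]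
    rw [← e1, e2]
    apply Real.rpow_le_rpow (by positivity) _ hα.le
    have h7 : (1-q) / (M':ℝ) ≤ 1 - r := by
      rw [div_le_iff₀ hMR]
      nlinarith
    calc (1-r)⁻¹ ≤ ((1-q)/(M':ℝ))⁻¹ := inv_anti₀ (by positivity) h7
      _ = (M':ℝ) * (1-q)⁻¹ := by field_simp
  calc ∑' t : ℕ, (((t:ℝ)+1) ^ α - (t:ℝ) ^ α) * q ^ (t / M')
      ≤ q⁻¹ * ((1-r) * ∑' t : ℕ, ((t:ℝ)+1) ^ α * r ^ t) := h4
    _ ≤ q⁻¹ * (Kc α * (1-r) ^ (-α)) := by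
        apply mul_le_mul_of_nonneg_left h5 (by positivity)
    _ ≤ q⁻¹ * (Kc α * ((M':ℝ) ^ α * (1-q) ^ (-α))) := by
        apply mul_le_mul_of_nonneg_left _ (by positivity)
        exact mul_le_mul_of_nonneg_left h6 (Kc_pos hα).le
    _ = q⁻¹ * Kc α * (M':ℝ) ^ α * (1-q) ^ (-α) := by ring

noncomputable def aE (α : ℝ) (t : ℕ) : ℝ≥0∞ := ENNReal.ofReal (((t:ℝ)+1) ^ α - (t:ℝ) ^ α)

lemma sum_aE {α : ℝ} (hα : 0 < α) (T : ℕ) :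
    ∑ t ∈ Finset.range T, aE α t = ((T:ℝ≥0∞)) ^ α := by
  unfold aE
  rw [← ENNReal.ofReal_sum_of_nonneg (fun t _ => ann_nonneg hα t)]
  have h1 : ∑ t ∈ Finset.range T, (((t:ℝ)+1) ^ α - (t:ℝ) ^ α) = ((T:ℝ)) ^ α := by
    have h2 := Finset.sum_range_sub (fun t : ℕ => ((t:ℝ)) ^ α) T
    have h3 : ∑ t ∈ Finset.range T, (((t:ℝ)+1) ^ α - (t:ℝ) ^ α)
        = ∑ t ∈ Finset.range T, ((((t+1:ℕ)):ℝ) ^ α - ((t:ℕ):ℝ) ^ α) := by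
      apply Finset.sum_congr rfl; intro t _; push_cast; ring_nf
    rw [h3, h2]
    simp [Real.zero_rpow hα.ne']
  rw [h1, ← ENNReal.ofReal_natCast T, ENNReal.ofReal_rpow_of_nonneg (Nat.cast_nonneg T) hα.le]

lemma exists_nat_rpow_gt {α : ℝ} (hα : 0 < α) (x : ℝ≥0∞) (hx : x ≠ ⊤) :
    ∃ T : ℕ, x < ((T:ℝ≥0∞)) ^ α := by
  obtain ⟨T, hT⟩ := exists_nat_gt ((x.toReal + 1) ^ (α⁻¹))
  refine ⟨T, ?_⟩
  have hb : (0:ℝ) ≤ x.toReal + 1 := by positivity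
  have h1 : (x.toReal + 1) = ((x.toReal + 1) ^ (α⁻¹)) ^ α := by
    rw [← Real.rpow_mul hb, inv_mul_cancel₀ hα.ne', Real.rpow_one]
  have h2 : (x.toReal + 1) ≤ (T:ℝ) ^ α := by
    rw [h1]
    exact Real.rpow_le_rpow (Real.rpow_nonneg hb _) hT.le hα.le
  calc x = ENNReal.ofReal x.toReal := (ENNReal.ofReal_toReal hx).symm
    _ < ENNReal.ofReal (x.toReal + 1) := by
        rw [ENNReal.ofReal_lt_ofReal_iff (by positivity)]
        linarith [ENNReal.toReal_nonneg (a := x)]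
    _ ≤ ENNReal.ofReal ((T:ℝ) ^ α) := ENNReal.ofReal_le_ofReal h2
    _ = ((T:ℝ≥0∞)) ^ α := by
        rw [← ENNReal.ofReal_rpow_of_nonneg (Nat.cast_nonneg T) hα.le, ENNReal.ofReal_natCast]

lemma lintegral_le_of_simple {X : Type*} [MeasurableSpace X] (μ : Measure X)
    (f h : X → ℝ≥0∞)
    (hle : ∀ g : SimpleFunc X ℝ≥0∞, ⇑g ≤ f → ∀ y, g y ≤ h y) :
    ∫⁻ y, f y ∂μ ≤ ∫⁻ y, h y ∂μ := by
  rw [MeasureTheory.lintegral_def]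
  refine iSup₂_le fun g hg => ?_
  rw [← MeasureTheory.SimpleFunc.lintegral_eq_lintegral]
  exact MeasureTheory.lintegral_mono (hle g hg)

end AuxSeries

section AuxAtom
variable [Fintype A] [MeasurableSpace A]

/-- Points of `A` not separated by measurable sets. -/
def atomRel (a b : A) : Prop := ∀ S : Set A, MeasurableSet S → (a ∈ S ↔ b ∈ S)

lemma atomRel_refl (a : A) : atomRel a a := fun _ _ => Iff.rfl

omit [Fintype A] in
lemma atomRel_symm {a b : A} (h : atomRel a b) : atomRel b a := fun S hS => (h S hS).symm

lemma measurableSet_setOf_atomRel (a : A) : MeasurableSet {b | atomRel a b} := by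
  have he : {b | atomRel a b}
      = ⋂ (S : Set A), ⋂ (_ : MeasurableSet S), {b | a ∈ S ↔ b ∈ S} := by
    ext b; simp [atomRel]
  rw [he]
  refine MeasurableSet.iInter fun S => MeasurableSet.iInter fun hS => ?_
  by_cases haS : a ∈ S
  · have : {b | a ∈ S ↔ b ∈ S} = S := by ext b; simp [haS]
    rw [this]; exact hS
  · have : {b | a ∈ S ↔ b ∈ S} = Sᶜ := by ext b; simp [haS]
    rw [this]; exact hS.compl

omit [Fintype A] in
lemma mem_iff_of_atomRel {G : Set (ℕ → A)} (hG : MeasurableSet G)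
    {x y : ℕ → A} (h : ∀ i, atomRel (x i) (y i)) : x ∈ G ↔ y ∈ G := by
  let 𝔖 : MeasurableSpace (ℕ → A) :=
  { MeasurableSet' := fun G => ∀ x y : ℕ → A, (∀ i, atomRel (x i) (y i)) → (x ∈ G ↔ y ∈ G)
    measurableSet_empty := fun _ _ _ => Iff.rfl
    measurableSet_compl := fun s hs x y hxy => by
      simp only [Set.mem_compl_iff]
      exact not_congr (hs x y hxy)
    measurableSet_iUnion := fun f hf x y hxy => by
      simp only [Set.mem_iUnion]
      exact exists_congr fun i => hf i x y hxy }
  have hle : (MeasurableSpace.pi : MeasurableSpace (ℕ → A)) ≤ 𝔖 := by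
    rw [MeasurableSpace.pi]
    refine iSup_le fun i => ?_
    intro s hs
    obtain ⟨s', hs', rfl⟩ := hs
    intro x y hxy
    exact hxy i s' hs'
  exact hle G hG x y h

variable {n : ℕ}

/-- The atom-cylinder: a canonical measurable hull of `cyl u`. -/
def cylA (u : Fin n → A) : Set (ℕ → A) := {x | ∀ i : Fin n, atomRel (u i) (x i)}

/-- Atom-occurrence of `u` at position `j`. -/
def occA (u : Fin n → A) (j : ℕ) : Set (ℕ → A) := {x | ∀ i : Fin n, atomRel (u i) (x (j + i))}

/-- No atom-occurrence of `u` at any position `< t`. -/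
def avA (u : Fin n → A) (t : ℕ) : Set (ℕ → A) := {x | ∀ j < t, x ∉ occA u j}

lemma measurableSet_occA (u : Fin n → A) (j : ℕ) : MeasurableSet (occA u j) := by
  have he : occA u j = ⋂ i : Fin n, (fun x : ℕ → A => x (j + i)) ⁻¹' {b | atomRel (u i) b} := by
    ext x; simp [occA]
  rw [he]
  exact MeasurableSet.iInter fun i =>
    (measurableSet_setOf_atomRel (u i)).preimage (measurable_pi_apply _)

lemma measurableSet_cylA (u : Fin n → A) : MeasurableSet (cylA u) := by
  have he : cylA u = occA u 0 := by
    ext x; simp [cylA, occA]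
  rw [he]; exact measurableSet_occA u 0

lemma measurableSet_avA (u : Fin n → A) (t : ℕ) : MeasurableSet (avA u t) := by
  have he : avA u t = ⋂ (j : ℕ), ⋂ (_ : j < t), (occA u j)ᶜ := by
    ext x; simp [avA]
  rw [he]
  exact MeasurableSet.iInter fun j => MeasurableSet.iInter fun _ =>
    (measurableSet_occA u j).compl

omit [Fintype A] [MeasurableSpace A] in
lemma avA_antitone [MeasurableSpace A] (u : Fin n → A) {s t : ℕ} (h : s ≤ t) :
    avA u t ⊆ avA u s :=
  fun x hx j hj => hx j (lt_of_lt_of_le hj h)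

omit [Fintype A] [MeasurableSpace A] in
lemma cyl_subset_cylA [MeasurableSpace A] (u : Fin n → A) : cyl u ⊆ cylA u := by
  intro x hx i S hS
  rw [hx i]

/-- `cylA u` has the same measure as (the outer measure of) `cyl u`. -/
lemma measure_cylA (Q : Measure (ℕ → A)) (u : Fin n → A) : Q (cylA u) = Q (cyl u) := by
  refine le_antisymm ?_ (measure_mono (cyl_subset_cylA u))
  have hsub : cylA u ⊆ toMeasurable Q (cyl u) := by
    intro x' hx'
    set x : ℕ → A := fun m => if hm : m < n then u ⟨m, hm⟩ else x' m with hxdef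
    have hx : x ∈ cyl u := by
      intro i
      simp only [hxdef, dif_pos i.isLt]
    have hrel : ∀ m, atomRel (x m) (x' m) := by
      intro m
      by_cases hm : m < n
      · simp only [hxdef, dif_pos hm]
        exact hx' ⟨m, hm⟩
      · simp only [hxdef, dif_neg hm]
        exact atomRel_refl _
    exact (mem_iff_of_atomRel (measurableSet_toMeasurable Q (cyl u)) hrel).mp
      (subset_toMeasurable Q (cyl u) hx)
  calc Q (cylA u) ≤ Q (toMeasurable Q (cyl u)) := measure_mono hsub
    _ = Q (cyl u) := measure_toMeasurable _

omit [Fintype A] [MeasurableSpace A] in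
lemma shift_iterate_apply_s4 (m : ℕ) (x : ℕ → A) (i : ℕ) : (shift^[m] x) i = x (i + m) := by
  induction m generalizing x with
  | zero => rfl
  | succ m ih =>
    rw [Function.iterate_succ_apply, ih (shift x)]
    show x (i + m + 1) = x (i + (m + 1))
    ring_nf

lemma measurable_shift : Measurable (shift (A := A)) :=
  measurable_pi_lambda _ fun i => measurable_pi_apply (i + 1)

end AuxAtom

/-- Under selective lower decoupling (event form, `τ_n = o(n)`,
`C_n = e^{o(n)}`, `C_n ≥ C_1 > 1`), for every `α > 0` there is an `e^{o(n)}`-sequence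
`κ_{α,n}` such that `∫ W_n(u,y)^α dQ(y) ≤ κ_{α,n} Q_n(u)^{-α}` for every `n ≥ 1` and
every `u` in the support of `Q_n`. -/

theorem stmt4 {A : Type*} [Fintype A] [MeasurableSpace A]
    (Q : Measure (ℕ → A)) [IsProbabilityMeasure Q]
    (hinv : MeasurePreserving (shift (A := A)) Q Q)
    (τ : ℕ → ℕ) (C : ℕ → ℝ)
    (hC1 : 1 < C 1) (hCge : ∀ n, C 1 ≤ C n)
    (hτo : Tendsto (fun n : ℕ => (τ n : ℝ) / n) atTop (nhds 0))
    (hCo : Tendsto (fun n : ℕ => Real.log (C n) / n) atTop (nhds 0))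
    (hSLD : SLDE Q τ C)
    (α : ℝ) (hα : 0 < α) :
    ∃ κ : ℕ → ℝ, (∀ n, 0 < κ n) ∧
      Tendsto (fun n : ℕ => Real.log (κ n) / n) atTop (nhds 0) ∧
      ∀ n : ℕ, 0 < n → ∀ u : Fin n → A, 0 < cylP Q u →
        ∫⁻ y, (ENat.toENNReal (waitTime u y)) ^ α ∂Q ≤
          ENNReal.ofReal (κ n * cylP Q u ^ (-α)) := by
  classical
  have hC1pos : (0:ℝ) < C 1 := lt_trans one_pos hC1
  have hCpos : ∀ m, (0:ℝ) < C m := fun m => lt_of_lt_of_le hC1pos (hCge m)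
  have hCgt1 : ∀ m, (1:ℝ) < C m := fun m => lt_of_lt_of_le hC1 (hCge m)
  set q₀ : ℝ := 1 - (C 1)⁻¹ with hq₀def
  have hq₀pos : 0 < q₀ := by
    have : (C 1)⁻¹ < 1 := by
      rw [inv_lt_one_iff₀]; right; exact hC1
    simp only [hq₀def]; linarith
  set κ : ℕ → ℝ := fun m => q₀⁻¹ * Kc α * ((m:ℝ) + (τ m:ℝ) + 1) ^ α * (C m) ^ α with hκdef
  have hκpos : ∀ m, 0 < κ m := by
    intro m
    have h1 : (0:ℝ) < (m:ℝ) + (τ m:ℝ) + 1 := by positivity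
    have h2 := Real.rpow_pos_of_pos h1 α
    have h3 := Real.rpow_pos_of_pos (hCpos m) α
    have h4 := Kc_pos hα
    positivity
  refine ⟨κ, hκpos, ?_, ?_⟩
  · -- asymptotics
    have hlogκ : ∀ m : ℕ, Real.log (κ m)
        = Real.log (q₀⁻¹ * Kc α) + α * Real.log ((m:ℝ) + (τ m:ℝ) + 1)
          + α * Real.log (C m) := by
      intro m
      have h1 : (0:ℝ) < (m:ℝ) + (τ m:ℝ) + 1 := by positivity
      have h2 : (0:ℝ) < q₀⁻¹ * Kc α := mul_pos (inv_pos.mpr hq₀pos) (Kc_pos hα)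
      have h3 := Real.rpow_pos_of_pos h1 α
      have h4 := Real.rpow_pos_of_pos (hCpos m) α
      have h5 : κ m = (q₀⁻¹ * Kc α) * ((m:ℝ) + (τ m:ℝ) + 1) ^ α * (C m) ^ α := by
        simp only [hκdef]
      rw [h5, Real.log_mul (by positivity) h4.ne', Real.log_mul h2.ne' h3.ne',
        Real.log_rpow h1, Real.log_rpow (hCpos m)]
    have T1 : Tendsto (fun m : ℕ => Real.log (q₀⁻¹ * Kc α) / (m:ℝ)) atTop (nhds 0) :=
      tendsto_const_div_atTop_nhds_zero_nat _
    have Tlog : Tendsto (fun m : ℕ => Real.log (m:ℝ) / (m:ℝ)) atTop (nhds 0) := by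
      have h := Real.isLittleO_log_id_atTop.tendsto_div_nhds_zero
      exact h.comp tendsto_natCast_atTop_atTop
    have T3 : Tendsto (fun m : ℕ => α * Real.log (C m) / (m:ℝ)) atTop (nhds 0) := by
      have h := hCo.const_mul α
      simp only [mul_zero] at h
      apply h.congr
      intro m
      ring
    have T2 : Tendsto (fun m : ℕ => α * Real.log ((m:ℝ) + (τ m:ℝ) + 1) / (m:ℝ))
        atTop (nhds 0) := by
      have hub : Tendsto (fun m : ℕ => α * (Real.log 3 / (m:ℝ) + Real.log (m:ℝ) / (m:ℝ)))
          atTop (nhds 0) := by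
        have h := ((tendsto_const_div_atTop_nhds_zero_nat (Real.log 3)).add Tlog).const_mul α
        simpa using h
      have hev : ∀ᶠ m : ℕ in atTop,
          α * Real.log ((m:ℝ) + (τ m:ℝ) + 1) / (m:ℝ)
            ≤ α * (Real.log 3 / (m:ℝ) + Real.log (m:ℝ) / (m:ℝ)) := by
        have hev1 : ∀ᶠ m : ℕ in atTop, (τ m : ℝ) / (m:ℝ) < 1 :=
          hτo.eventually (eventually_lt_nhds one_pos)
        filter_upwards [hev1, eventually_ge_atTop 1] with m hm1 hm2
        have hmR : (1:ℝ) ≤ (m:ℝ) := by exact_mod_cast hm2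
        have hmpos : (0:ℝ) < (m:ℝ) := by linarith
        have hτm : (τ m : ℝ) < (m:ℝ) := by rwa [div_lt_one hmpos] at hm1
        have hτnn : (0:ℝ) ≤ (τ m:ℝ) := Nat.cast_nonneg _
        have harg : (m:ℝ) + (τ m:ℝ) + 1 ≤ 3 * (m:ℝ) := by linarith
        have hlogle : Real.log ((m:ℝ) + (τ m:ℝ) + 1) ≤ Real.log 3 + Real.log (m:ℝ) := by
          calc Real.log ((m:ℝ) + (τ m:ℝ) + 1) ≤ Real.log (3 * (m:ℝ)) :=
                Real.log_le_log (by positivity) harg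
            _ = Real.log 3 + Real.log (m:ℝ) := Real.log_mul (by norm_num) (by linarith)
        calc α * Real.log ((m:ℝ) + (τ m:ℝ) + 1) / (m:ℝ)
            ≤ α * (Real.log 3 + Real.log (m:ℝ)) / (m:ℝ) := by
              gcongr
          _ = α * (Real.log 3 / (m:ℝ) + Real.log (m:ℝ) / (m:ℝ)) := by ring
      have hlb : ∀ᶠ m : ℕ in atTop,
          0 ≤ α * Real.log ((m:ℝ) + (τ m:ℝ) + 1) / (m:ℝ) := by
        filter_upwards [eventually_ge_atTop 1] with m hm2
        have hmR : (1:ℝ) ≤ (m:ℝ) := by exact_mod_cast hm2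
        have hτnn : (0:ℝ) ≤ (τ m:ℝ) := Nat.cast_nonneg _
        have hlognn : (0:ℝ) ≤ Real.log ((m:ℝ) + (τ m:ℝ) + 1) :=
          Real.log_nonneg (by linarith)
        positivity
      exact tendsto_of_tendsto_of_tendsto_of_le_of_le' tendsto_const_nhds hub hlb hev
    have hsum := (T1.add T2).add T3
    simp only [add_zero] at hsum
    apply hsum.congr
    intro m
    rw [hlogκ m]
    ring
  · -- main bound
    intro n hn u hu
    set p : ℝ := cylP Q u with hpdef
    have hp0 : 0 < p := hu
    have hp1 : p ≤ 1 := by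
      rw [hpdef, cylP, ← ENNReal.toReal_one]
      exact ENNReal.toReal_mono ENNReal.one_ne_top prob_le_one
    set M' : ℕ := n + τ n with hM'def
    have hM'1 : 1 ≤ M' := by omega
    have hpA : (Q (cylA u)).toReal = p := by rw [measure_cylA]; rfl
    set qq : ℝ := 1 - (C n)⁻¹ * p with hqqdef
    have hinvle : (C n)⁻¹ ≤ (C 1)⁻¹ := by
      apply inv_anti₀ hC1pos (hCge n)
    have hqq_ge : q₀ ≤ qq := by
      have h1 : (C n)⁻¹ * p ≤ (C 1)⁻¹ * 1 :=
        mul_le_mul hinvle hp1 hp0.le (inv_nonneg.mpr hC1pos.le)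
      simp only [hqqdef, hq₀def]; linarith
    have hqq0 : 0 < qq := lt_of_lt_of_le hq₀pos hqq_ge
    have hqq1 : qq < 1 := by
      have h1 : 0 < (C n)⁻¹ * p := mul_pos (inv_pos.mpr (hCpos n)) hp0
      simp only [hqqdef]; linarith
    have hcylA_Fn : FnSet n (cylA u) :=
      ⟨{v : Fin n → A | ∀ i, atomRel (u i) (v i)}, rfl⟩
    -- tail recursion
    have tail : ∀ k : ℕ, ∃ B : Set (ℕ → A), MeasurableSet B ∧ avA u (k * M') ⊆ B ∧
        (Q B).toReal ≤ qq ^ k := by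
      intro k
      induction k with
      | zero => exact ⟨Set.univ, MeasurableSet.univ, Set.subset_univ _, by simp⟩
      | succ k ih =>
        obtain ⟨B, hB, hsub, hqB⟩ := ih
        obtain ⟨ℓ, hℓ, hSL⟩ := hSLD n hn (cylA u) hcylA_Fn B hB
        set X : Set (ℕ → A) := (shift^[n+ℓ]) ⁻¹' B with hXdef
        have hXmeas : MeasurableSet X := (measurable_shift.iterate (n+ℓ)) hB
        have hQX : Q X = Q B := (hinv.iterate (n+ℓ)).measure_preimage hB.nullMeasurableSet
        refine ⟨(cylA u)ᶜ ∩ X, (measurableSet_cylA u).compl.inter hXmeas, ?_, ?_⟩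
        · intro x hx
          constructor
          · intro hc
            have h0 : x ∈ occA u 0 := by
              intro i
              have := hc i
              simpa using this
            exact hx 0 (Nat.mul_pos (Nat.succ_pos k) hM'1) h0
          · apply hsub
            intro j hj hocc
            have hjlt : j + (n + ℓ) < (k+1) * M' := by
              have h1 : n + ℓ ≤ M' := by simp only [hM'def]; omega
              have h2 : (k+1) * M' = k * M' + M' := by ring
              omega
            apply hx (j + (n + ℓ)) hjlt
            intro i
            have h3 := hocc i
            rw [shift_iterate_apply_s4] at h3
            have harg : j + (i:ℕ) + (n+ℓ) = j + (n+ℓ) + (i:ℕ) := by omega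
            rwa [harg] at h3
        · have hXc : (cylA u)ᶜ ∩ X = X \ cylA u := by
            rw [Set.diff_eq, Set.inter_comm]
          have hsplit : Q (X ∩ cylA u) + Q (X \ cylA u) = Q X :=
            measure_inter_add_diff X (measurableSet_cylA u)
          have hfin1 : Q (X ∩ cylA u) ≠ ⊤ := measure_ne_top Q _
          have hfin2 : Q (X \ cylA u) ≠ ⊤ := measure_ne_top Q _
          have htR : (Q (X ∩ cylA u)).toReal + (Q (X \ cylA u)).toReal = (Q X).toReal := by
            rw [← ENNReal.toReal_add hfin1 hfin2, hsplit]
          have hSL' : (C n)⁻¹ * p * (Q B).toReal ≤ (Q (X ∩ cylA u)).toReal := by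
            rw [Set.inter_comm]
            rw [hpA] at hSL
            exact hSL
          have hQXr : (Q X).toReal = (Q B).toReal := by rw [hQX]
          have hBnn : 0 ≤ (Q B).toReal := ENNReal.toReal_nonneg
          rw [hXc]
          have hfinal : (Q (X \ cylA u)).toReal ≤ qq * (Q B).toReal := by
            have : (Q (X \ cylA u)).toReal = (Q B).toReal - (Q (X ∩ cylA u)).toReal := by
              linarith [htR, hQXr]
            rw [this, hqqdef]
            nlinarith [hSL']
          calc (Q (X \ cylA u)).toReal ≤ qq * (Q B).toReal := hfinal
            _ ≤ qq * qq ^ k := mul_le_mul_of_nonneg_left hqB hqq0.le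
            _ = qq ^ (k+1) := by ring
    have tailA : ∀ k : ℕ, (Q (avA u (k * M'))).toReal ≤ qq ^ k := by
      intro k
      obtain ⟨B, hB, hsub, hqB⟩ := tail k
      calc (Q (avA u (k * M'))).toReal
          ≤ (Q B).toReal := ENNReal.toReal_mono (measure_ne_top Q B) (measure_mono hsub)
        _ ≤ qq ^ k := hqB
    have tailAt : ∀ t : ℕ, Q (avA u t) ≤ ENNReal.ofReal (qq ^ (t / M')) := by
      intro t
      have h1 : avA u t ⊆ avA u ((t / M') * M') :=
        avA_antitone u (Nat.div_mul_le_self t M')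
      refine le_trans (measure_mono h1) ?_
      rw [ENNReal.le_ofReal_iff_toReal_le (measure_ne_top Q _) (pow_nonneg hqq0.le _)]
      exact tailA (t / M')
    -- the measurable majorant
    set hfun : (ℕ → A) → ℝ≥0∞ :=
      fun y => ∑' t : ℕ, (avA u t).indicator (fun _ => aE α t) y with hfundef
    have hstep1 : ∫⁻ y, (ENat.toENNReal (waitTime u y)) ^ α ∂Q ≤ ∫⁻ y, hfun y ∂Q := by
      apply lintegral_le_of_simple
      intro g hg y
      have hpartial : ∀ T : ℕ, (∀ t < T, y ∈ avA u t) → ((T:ℝ≥0∞)) ^ α ≤ hfun y := by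
        intro T hT
        calc ((T:ℝ≥0∞)) ^ α = ∑ t ∈ Finset.range T, aE α t := (sum_aE hα T).symm
          _ = ∑ t ∈ Finset.range T, (avA u t).indicator (fun _ => aE α t) y := by
              refine Finset.sum_congr rfl fun t ht => ?_
              rw [Set.indicator_of_mem (hT t (Finset.mem_range.mp ht))]
          _ ≤ hfun y := ENNReal.sum_le_tsum _
      by_cases hall : ∀ t : ℕ, y ∈ avA u t
      · by_cases hh : hfun y = ⊤
        · rw [hh]; exact le_top
        · obtain ⟨T, hT⟩ := exists_nat_rpow_gt hα (hfun y) hh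
          exact absurd (hpartial T (fun t _ => hall t)) (not_le.mpr hT)
      · push_neg at hall
        have hex : ∃ t, y ∉ avA u t := hall
        set t₀ := Nat.find hex with ht₀def
        have h0 : y ∉ avA u t₀ := Nat.find_spec hex
        have hmin : ∀ s, s < t₀ → y ∈ avA u s := by
          intro s hs
          have := Nat.find_min hex hs
          simpa using this
        obtain ⟨j, hj, hocc⟩ : ∃ j, j < t₀ ∧ y ∈ occA u j := by
          by_contra hcon
          push_neg at hcon
          exact h0 (fun j hjt => hcon j hjt)
        set y' : ℕ → A := fun m =>
          if hm : j ≤ m ∧ m < j + n then u ⟨m - j, by omega⟩ else y m with hy'def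
        have hy'occ : ∀ i : Fin n, y' (j + (i:ℕ)) = u i := by
          intro i
          have hc : j ≤ j + (i:ℕ) ∧ j + (i:ℕ) < j + n := ⟨Nat.le_add_right _ _, by omega⟩
          simp only [hy'def, dif_pos hc]
          congr 1
          apply Fin.ext
          simp
        have hrel : ∀ m, atomRel (y m) (y' m) := by
          intro m
          by_cases hm : j ≤ m ∧ m < j + n
          · simp only [hy'def, dif_pos hm]
            have h2 := hocc ⟨m - j, by omega⟩
            have hj' : j + (m - j) = m := by omega
            rw [show j + ((⟨m - j, by omega⟩ : Fin n) : ℕ) = m from by simp [hj']] at h2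
            exact atomRel_symm h2
          · simp only [hy'def, dif_neg hm]
            exact atomRel_refl _
        have hgy : g y = g y' := by
          have hfib : MeasurableSet (⇑g ⁻¹' {g y}) := g.measurableSet_fiber (g y)
          have hy'mem : y' ∈ ⇑g ⁻¹' {g y} :=
            (mem_iff_of_atomRel hfib hrel).mp (Set.mem_preimage.mpr rfl)
          exact (Set.mem_singleton_iff.mp hy'mem).symm
        have hwait : waitTime u y' ≤ (j:ℕ∞) + 1 := sInf_le ⟨j, rfl, hy'occ⟩
        have hcast : (ENat.toENNReal (waitTime u y')) ≤ ((t₀:ℕ) : ℝ≥0∞) := by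
          have h1 : waitTime u y' ≤ ((j+1 : ℕ) : ℕ∞) := by
            refine le_trans hwait ?_
            push_cast
            rfl
          have h2 : ((j+1:ℕ) : ℕ∞) ≤ ((t₀:ℕ) : ℕ∞) := by
            exact_mod_cast hj
          calc (ENat.toENNReal (waitTime u y'))
              ≤ ENat.toENNReal ((j+1:ℕ):ℕ∞) := ENat.toENNReal_le.mpr h1
            _ ≤ ENat.toENNReal ((t₀:ℕ):ℕ∞) := ENat.toENNReal_le.mpr h2
            _ = ((t₀:ℕ):ℝ≥0∞) := by simp
        calc g y = g y' := hgy
          _ ≤ (ENat.toENNReal (waitTime u y')) ^ α := hg y'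
          _ ≤ ((t₀:ℝ≥0∞)) ^ α := ENNReal.rpow_le_rpow hcast hα.le
          _ ≤ hfun y := hpartial t₀ hmin
    have hstep2 : ∫⁻ y, hfun y ∂Q = ∑' t : ℕ, aE α t * Q (avA u t) := by
      rw [hfundef]
      rw [MeasureTheory.lintegral_tsum
        (fun t => (measurable_const.indicator (measurableSet_avA u t)).aemeasurable)]
      exact tsum_congr fun t => MeasureTheory.lintegral_indicator_const (measurableSet_avA u t) _
    have hsummain := (tail_series_bound hM'1 hα hqq0 hqq1).1
    have hbound := (tail_series_bound hM'1 hα hqq0 hqq1).2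
    have hstep3 : ∑' t : ℕ, aE α t * Q (avA u t)
        ≤ ∑' t : ℕ, ENNReal.ofReal ((((t:ℝ)+1) ^ α - (t:ℝ) ^ α) * qq ^ (t / M')) := by
      apply ENNReal.tsum_le_tsum
      intro t
      calc aE α t * Q (avA u t)
          ≤ aE α t * ENNReal.ofReal (qq ^ (t / M')) := mul_le_mul_right (tailAt t) _
        _ = ENNReal.ofReal ((((t:ℝ)+1) ^ α - (t:ℝ) ^ α) * qq ^ (t / M')) := by
            rw [aE, ← ENNReal.ofReal_mul (ann_nonneg hα t)]
    have hstep4 : ∑' t : ℕ, ENNReal.ofReal ((((t:ℝ)+1) ^ α - (t:ℝ) ^ α) * qq ^ (t / M'))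
        = ENNReal.ofReal (∑' t : ℕ, (((t:ℝ)+1) ^ α - (t:ℝ) ^ α) * qq ^ (t / M')) := by
      rw [ENNReal.ofReal_tsum_of_nonneg
        (fun t => mul_nonneg (ann_nonneg hα t) (pow_nonneg hqq0.le _)) hsummain]
    have hreal : ∑' t : ℕ, (((t:ℝ)+1) ^ α - (t:ℝ) ^ α) * qq ^ (t / M')
        ≤ κ n * p ^ (-α) := by
      have h1 : qq⁻¹ ≤ q₀⁻¹ := inv_anti₀ hq₀pos hqq_ge
      have h2 : 1 - qq = (C n)⁻¹ * p := by simp only [hqqdef]; ring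
      have h3 : (1-qq) ^ (-α) = (C n) ^ α * p ^ (-α) := by
        rw [h2, Real.mul_rpow (inv_nonneg.mpr (hCpos n).le) hp0.le]
        congr 1
        rw [Real.inv_rpow (hCpos n).le, Real.rpow_neg (hCpos n).le, inv_inv]
      have h4 : ((M':ℕ):ℝ) ^ α ≤ ((n:ℝ) + (τ n:ℝ) + 1) ^ α := by
        apply Real.rpow_le_rpow (Nat.cast_nonneg _) _ hα.le
        simp only [hM'def]
        push_cast
        linarith
      have h5 : (0:ℝ) < p ^ (-α) := Real.rpow_pos_of_pos hp0 _
      have h6 : (0:ℝ) < (C n) ^ α := Real.rpow_pos_of_pos (hCpos n) _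
      have h7 : (0:ℝ) ≤ ((M':ℕ):ℝ) ^ α := Real.rpow_nonneg (Nat.cast_nonneg _) _
      calc ∑' t : ℕ, (((t:ℝ)+1) ^ α - (t:ℝ) ^ α) * qq ^ (t / M')
          ≤ qq⁻¹ * Kc α * (M':ℝ) ^ α * (1-qq) ^ (-α) := hbound
        _ = qq⁻¹ * Kc α * (M':ℝ) ^ α * ((C n) ^ α * p ^ (-α)) := by rw [h3]
        _ ≤ q₀⁻¹ * Kc α * (((n:ℝ) + (τ n:ℝ) + 1) ^ α) * ((C n) ^ α * p ^ (-α)) := by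
            gcongr <;> first
              | exact (Kc_pos hα).le
              | exact h1
              | exact h4
              | exact (mul_pos h6 h5).le
              | exact mul_nonneg (inv_nonneg.mpr hq₀pos.le) (Kc_pos hα).le
              | exact h7
              | positivity
        _ = κ n * p ^ (-α) := by
            simp only [hκdef]
            ring
    calc ∫⁻ y, (ENat.toENNReal (waitTime u y)) ^ α ∂Q
        ≤ ∫⁻ y, hfun y ∂Q := hstep1
      _ = ∑' t : ℕ, aE α t * Q (avA u t) := hstep2
      _ ≤ ∑' t : ℕ, ENNReal.ofReal ((((t:ℝ)+1) ^ α - (t:ℝ) ^ α) * qq ^ (t / M')) := hstep3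
      _ = ENNReal.ofReal (∑' t : ℕ, (((t:ℝ)+1) ^ α - (t:ℝ) ^ α) * qq ^ (t / M')) := hstep4
      _ ≤ ENNReal.ofReal (κ n * p ^ (-α)) := ENNReal.ofReal_le_ofReal hreal

end RT
end

section
/- Let P be a shift-invariant measure on Ω = A^ℕ satisfying the periodic approximation assumption (PA): for every ε > 0 there exist p ∈ ℕ and u ∈ A^p with liminf_{n→∞} (1/(np)) ln P_{np}(u^n) ≥ γ₊ - ε, where γ₊ = limsup_{n→∞} (1/n) sup_{v∈A^n} ln P_n(v). Then liminf_{n→∞} (1/n) ln P{x : R_n(x) < n} ≥ γ₊. -/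
open MeasureTheory Filter Set
open scoped ENNReal

namespace RT

variable {A : Type*}

lemma returnTime_lt_of_cylOf {A : Type*} {p n m : ℕ} (hp : 0 < p) (hpn : p < n)
    (hmp : n + p ≤ m * p) (u : Fin p → A) {x : ℕ → A}
    (hx : x ∈ cylOf (m * p) (perExt hp u)) :
    returnTime n x < (n : ℕ∞) := by
  have hle : returnTime n x ≤ (p : ℕ∞) := by
    apply sInf_le
    refine ⟨p - 1, ?_, ?_⟩
    · exact_mod_cast (Nat.succ_pred_eq_of_pos hp).symm
    · intro i
      have h1 : p - 1 + 1 = p := Nat.succ_pred_eq_of_pos hp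
      have hi : (i : ℕ) < n := i.isLt
      have e1 : x (p - 1 + 1 + (i : ℕ)) = perExt hp u (p + (i : ℕ)) := by
        rw [h1]; exact hx (p + (i : ℕ)) (by omega)
      have e2 : x (i : ℕ) = perExt hp u (i : ℕ) := hx (i : ℕ) (by omega)
      rw [e1, e2]
      simp [perExt, Nat.add_mod_left]
  exact lt_of_le_of_lt hle (by exact_mod_cast hpn)

/-- Under the periodic approximation assumption (PA), one has
`liminf_n (1/n) ln P{x : R_n(x) < n} ≥ γ₊`, where
`γ₊ = limsup_n (1/n) sup_{v∈Aⁿ} ln P_n(v)`. -/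
theorem stmt7 {A : Type*} [Fintype A] [Nonempty A] [MeasurableSpace A]
    (P : Measure (ℕ → A)) [IsProbabilityMeasure P]
    (hinv : MeasurePreserving (shift (A := A)) P P)
    (γp : ℝ)
    (hγ : γp = Filter.limsup (fun n : ℕ =>
      Real.log (Finset.univ.sup' Finset.univ_nonempty
        fun u : Fin n → A => cylP P u) / (n : ℝ)) atTop)
    (hPA : ∀ ε > (0 : ℝ), ∃ (p : ℕ) (hp : 0 < p) (u : Fin p → A),
      ((γp - ε : ℝ) : EReal) ≤ Filter.liminf (fun n : ℕ =>
        (((((n : ℝ) * p)⁻¹ : ℝ)) : EReal) * elog (P (cylOf (n * p) (perExt hp u)))) atTop) :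
    (γp : EReal) ≤ Filter.liminf (fun n : ℕ =>
      ((((n : ℝ)⁻¹ : ℝ)) : EReal) * elog (P {x | returnTime n x < (n : ℕ∞)})) atTop := by
  by_contra hcon
  push_neg at hcon
  obtain ⟨d, hd1, hd2⟩ := EReal.exists_between_coe_real hcon
  have hdγ : d < γp := EReal.coe_lt_coe_iff.1 hd2
  obtain ⟨p, hp, u, hlim⟩ := hPA (γp - d) (by linarith)
  have hd : (d : EReal) ≤ Filter.liminf (fun n : ℕ =>
      (((((n : ℝ) * p)⁻¹ : ℝ)) : EReal) * elog (P (cylOf (n * p) (perExt hp u)))) atTop := by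
    have : γp - (γp - d) = d := by ring
    rwa [this] at hlim
  have key : ∀ c' : ℝ, c' < d → (c' : EReal) ≤ Filter.liminf (fun n : ℕ =>
      ((((n : ℝ)⁻¹ : ℝ)) : EReal) * elog (P {x | returnTime n x < (n : ℕ∞)})) atTop := by
    intro c' hc'
    set c : ℝ := (c' + d) / 2 with hcdef
    have hcc' : c' < c := by rw [hcdef]; linarith
    have hcd : c < d := by rw [hcdef]; linarith
    have hev1 : ∀ᶠ m : ℕ in atTop, (c : EReal) <
        (((((m : ℝ) * p)⁻¹ : ℝ)) : EReal) * elog (P (cylOf (m * p) (perExt hp u))) :=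
      Filter.eventually_lt_of_lt_liminf (lt_of_lt_of_le (EReal.coe_lt_coe_iff.2 hcd) hd)
    have htend : Tendsto (fun n : ℕ => n / p + 2) atTop atTop := by
      apply Filter.tendsto_atTop_atTop.2
      intro b
      refine ⟨b * p, fun n hn => ?_⟩
      have : b ≤ n / p := (Nat.le_div_iff_mul_le hp).2 hn
      omega
    have hev2 : ∀ᶠ n : ℕ in atTop, (c : EReal) <
        ((((((n / p + 2 : ℕ) : ℝ) * p)⁻¹ : ℝ)) : EReal) *
          elog (P (cylOf ((n / p + 2) * p) (perExt hp u))) := htend.eventually hev1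
    have hev3 : ∀ᶠ n : ℕ in atTop, (2 * (p : ℝ) * |c|) / n < c - c' :=
      (tendsto_const_div_atTop_nhds_zero_nat (2 * (p : ℝ) * |c|)).eventually_lt_const
        (by linarith)
    have hev4 : ∀ᶠ n : ℕ in atTop, p < n := Filter.eventually_gt_atTop p
    refine Filter.le_liminf_of_le (by isBoundedDefault) ?_
    filter_upwards [hev2, hev3, hev4] with n h2 h3 h4
    set m : ℕ := n / p + 2 with hmdef
    have hdm := Nat.div_add_mod n p
    have hmod := Nat.mod_lt n hp
    have hmplow : n + p ≤ m * p := by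
      have h5 : p * (n / p) + n % p = n := hdm
      nlinarith [h5, hmod]
    have hmphigh : m * p ≤ n + 2 * p := by
      have h6 : n / p * p ≤ n := Nat.div_mul_le_self n p
      nlinarith [h6]
    have hsub : cylOf (m * p) (perExt hp u) ⊆ {x | returnTime n x < (n : ℕ∞)} :=
      fun x hx => returnTime_lt_of_cylOf hp h4 hmplow u hx
    have hPle : P (cylOf (m * p) (perExt hp u)) ≤ P {x | returnTime n x < (n : ℕ∞)} :=
      measure_mono hsub
    set Q := P (cylOf (m * p) (perExt hp u)) with hQdef
    have hmR : (0 : ℝ) < (m : ℝ) * p := by positivity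
    have hQ0 : Q ≠ 0 := by
      intro h0
      rw [h0] at h2
      have : elog 0 = (⊥ : EReal) := by simp [elog]
      rw [this, EReal.coe_mul_bot_of_pos (by positivity)] at h2
      exact absurd h2 (not_lt_bot)
    have hQtop : Q ≠ ⊤ := measure_ne_top P _
    set r : ℝ := Real.log Q.toReal with hrdef
    have helogQ : elog Q = (r : EReal) := by simp [elog, hQ0, hQtop]; exact hrdef.symm
    rw [helogQ, ← EReal.coe_mul] at h2
    have hcr : c < ((m : ℝ) * p)⁻¹ * r := EReal.coe_lt_coe_iff.1 h2
    have hr : c * ((m : ℝ) * p) < r := by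
      have := (lt_div_iff₀ hmR).1 (by rwa [inv_mul_eq_div] at hcr)
      linarith [this]
    set S := P {x | returnTime n x < (n : ℕ∞)} with hSdef
    have hS0 : S ≠ 0 := by
      intro h0
      exact hQ0 (le_antisymm (le_trans hPle (le_of_eq h0)) zero_le)
    have hStop : S ≠ ⊤ := measure_ne_top P _
    set s : ℝ := Real.log S.toReal with hsdef
    have helogS : elog S = (s : EReal) := by simp [elog, hS0, hStop]; exact hsdef.symm
    have hrs : r ≤ s :=
      Real.log_le_log (ENNReal.toReal_pos hQ0 hQtop)
        ((ENNReal.toReal_le_toReal hQtop hStop).2 hPle)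
    rw [helogS, ← EReal.coe_mul, EReal.coe_le_coe_iff]
    have hn_pos : (0 : ℝ) < n := by
      have : 0 < n := lt_trans hp h4
      exact_mod_cast this
    rw [inv_mul_eq_div, le_div_iff₀ hn_pos]
    -- real arithmetic: c' * n ≤ s
    have hmplowR : (n : ℝ) + p ≤ (m : ℝ) * p := by exact_mod_cast hmplow
    have hmphighR : (m : ℝ) * p ≤ (n : ℝ) + 2 * p := by exact_mod_cast hmphigh
    have h3' : 2 * (p : ℝ) * |c| < (c - c') * n := by
      rw [div_lt_iff₀ hn_pos] at h3
      linarith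
    have habs1 : -|c| ≤ c := neg_abs_le c
    have habs2 : c ≤ |c| := le_abs_self c
    nlinarith [mul_nonneg (abs_nonneg c) (by linarith : (0:ℝ) ≤ (n : ℝ) + 2 * p - (m : ℝ) * p),
      mul_nonneg (by linarith : (0:ℝ) ≤ |c| + c) (by linarith : (0:ℝ) ≤ (m : ℝ) * p - n)]
  obtain ⟨c', h1', h2'⟩ := EReal.exists_between_coe_real hd1
  exact absurd (key c' (EReal.coe_lt_coe_iff.1 h2')) (not_le.2 h1')

end RT
end

section
/- Let I_Q : ℝ → [0,∞] be convex and lower semicontinuous with I_Q(s) = ∞ for s < 0, and let q_Q = I_Q^* be its Legendre–Fenchel transform. Define I_W(s) := ∞ for s < 0 and I_W(s) := inf_{r ≥ s}(r - s + I_Q(r)) for s ≥ 0. Then the Legendre–Fenchel transform of I_W satisfies I_W^*(α) = max{q_Q(α), q_Q(-1)} for every α ∈ ℝ. -/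
/-!
Writing `I_W^*(α) = sup_{0 ≤ s ≤ r} ((α + 1) s - r - I_Q(r))`, the objective is affine in `s`,
so the supremum over `s ∈ [0, r]` is attained at `s = r` or `s = 0`, giving `q_Q(α)` and
`q_Q(-1)` respectively; here `I_Q = ∞` on `(-∞, 0)` lets the suprema range over all of `ℝ`.
-/

open MeasureTheory Filter Set
open scoped ENNReal

namespace RT

variable {A : Type*}

theorem _root_.EReal.coe_sub_le_comm (a : ℝ) (x y : EReal) :
    (a : EReal) - x ≤ y ↔ (a : EReal) - y ≤ x := by
  induction x using EReal.rec <;> induction y using EReal.rec <;>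
    simp [← EReal.coe_sub, add_comm]

theorem _root_.EReal.coe_sub_iInf_le {ι : Sort*} (a : ℝ) (f : ι → EReal) {y : EReal}
    (h : ∀ i, (a : EReal) - f i ≤ y) : (a : EReal) - ⨅ i, f i ≤ y :=
  (EReal.coe_sub_le_comm a _ y).2 <| le_iInf fun i ↦ (EReal.coe_sub_le_comm a _ y).1 (h i)

theorem _root_.EReal.coe_sub_coe_add (a b : ℝ) (x : EReal) :
    (a : EReal) - ((b : EReal) + x) = ((a - b : ℝ) : EReal) - x := by
  induction x using EReal.rec <;> simp [← EReal.coe_sub, ← EReal.coe_add]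
  ring

theorem le_LF (f : ℝ → EReal) (α s : ℝ) : ((α * s : ℝ) : EReal) - f s ≤ LF f α :=
  le_iSup (fun s ↦ ((α * s : ℝ) : EReal) - f s) s

theorem LF_antitone {f g : ℝ → EReal} (hfg : f ≤ g) (α : ℝ) : LF g α ≤ LF f α :=
  iSup_mono fun s ↦ EReal.sub_le_sub le_rfl (hfg s)

theorem IW_le {IQ : ℝ → EReal} {s r : ℝ} (hs : 0 ≤ s) (hsr : s ≤ r) :
    IW IQ s ≤ ((r - s : ℝ) : EReal) + IQ r := by
  rw [IW, if_neg hs.not_gt]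
  exact iInf_le (fun r : {r : ℝ // s ≤ r} ↦ ((r.1 - s : ℝ) : EReal) + IQ r.1) ⟨r, hsr⟩

theorem IW_le_self {IQ : ℝ → EReal} (hneg : ∀ s : ℝ, s < 0 → IQ s = ⊤) : IW IQ ≤ IQ := by
  intro s
  rcases lt_or_ge s 0 with hs | hs
  · rw [hneg s hs]; exact le_top
  · simpa using IW_le (IQ := IQ) hs le_rfl

theorem LF_neg_one_le_LF_IW {IQ : ℝ → EReal} (hneg : ∀ s : ℝ, s < 0 → IQ s = ⊤) (α : ℝ) :
    LF IQ (-1) ≤ LF (IW IQ) α := by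
  refine iSup_le fun r ↦ ?_
  rcases lt_or_ge r 0 with hr | hr
  · rw [hneg r hr, EReal.sub_top]; exact bot_le
  calc ((-1 * r : ℝ) : EReal) - IQ r = ((α * 0 : ℝ) : EReal) - (((r - 0 : ℝ) : EReal) + IQ r) := by
        rw [EReal.coe_sub_coe_add]; norm_num
    _ ≤ ((α * 0 : ℝ) : EReal) - IW IQ 0 := EReal.sub_le_sub le_rfl (IW_le le_rfl hr)
    _ ≤ LF (IW IQ) α := le_LF (IW IQ) α 0

theorem mul_sub_sub_le_max {α s r : ℝ} (hs : 0 ≤ s) (hsr : s ≤ r) :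
    α * s - (r - s) ≤ max (α * r) (-1 * r) := by
  rcases le_total 0 (α + 1) with hα | hα
  · exact le_max_of_le_left (by nlinarith)
  · exact le_max_of_le_right (by nlinarith)

theorem LF_IW_le_max (IQ : ℝ → EReal) (α : ℝ) :
    LF (IW IQ) α ≤ max (LF IQ α) (LF IQ (-1)) := by
  refine iSup_le fun s ↦ ?_
  rcases lt_or_ge s 0 with hs | hs
  · rw [IW, if_pos hs, EReal.sub_top]; exact bot_le
  rw [IW, if_neg hs.not_gt]
  refine EReal.coe_sub_iInf_le _ _ fun ⟨r, hsr⟩ ↦ ?_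
  rw [EReal.coe_sub_coe_add]
  rcases le_max_iff.1 (mul_sub_sub_le_max (α := α) hs hsr) with h | h
  · exact (EReal.sub_le_sub (EReal.coe_le_coe_iff.2 h) le_rfl).trans
      ((le_LF IQ α r).trans (le_max_left _ _))
  · exact (EReal.sub_le_sub (EReal.coe_le_coe_iff.2 h) le_rfl).trans
      ((le_LF IQ (-1) r).trans (le_max_right _ _))

theorem stmt9_general (IQ : ℝ → EReal)
    (hneg : ∀ s : ℝ, s < 0 → IQ s = ⊤) :
    ∀ α : ℝ, LF (IW IQ) α = max (LF IQ α) (LF IQ (-1)) := fun α ↦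
  le_antisymm (LF_IW_le_max IQ α) <|
    max_le (LF_antitone (IW_le_self hneg) α) (LF_neg_one_le_LF_IW hneg α)

/-- With `I_Q` convex, lower semicontinuous, nonnegative and infinite on
`(-∞,0)`, and `q_Q = I_Q^*`, the Legendre–Fenchel transform of the waiting-time
rate function `I_W` satisfies `I_W^*(α) = max{q_Q(α), q_Q(-1)}` for every `α ∈ ℝ`. -/
theorem stmt9 (IQ : ℝ → EReal)
    (hnn : ∀ s, 0 ≤ IQ s)
    (hlsc : LowerSemicontinuous IQ)
    (hconv : ∀ (l s₁ s₂ : ℝ), 0 ≤ l → l ≤ 1 →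
      IQ (l * s₁ + (1 - l) * s₂) ≤ (l : EReal) * IQ s₁ + ((1 - l : ℝ) : EReal) * IQ s₂)
    (hneg : ∀ s : ℝ, s < 0 → IQ s = ⊤) :
    ∀ α : ℝ, LF (IW IQ) α = max (LF IQ α) (LF IQ (-1)) :=
  stmt9_general IQ hneg

end RT
end

section
/- Let Ω' be a subshift of A^ℕ with language L, and P ∈ P_inv(Ω) with supp P = Ω'. Suppose there is an e^{o(n)}-sequence (C_n) such that P_{n+m}(x_1^{n+m}) ≥ C_n^{-1} P_n(x_1^n) P_m(x_{n+1}^{n+m}) for all x ∈ Ω' and all n, m ∈ ℕ, and suppose Ω' satisfies the flexible specification property with gaps τ_n = o(n). Then P satisfies SLD: for all n, m ∈ ℕ, u ∈ A^n, v ∈ A^m, there exist 0 ≤ ℓ ≤ τ_n and ξ ∈ A^ℓ with P_{n+ℓ+m}(uξv) ≥ (C_n')^{-1} P_n(u) P_m(v) for some e^{o(n)}-sequence (C_n'). -/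
open MeasureTheory Filter Set
open scoped ENNReal

namespace RT

variable {A : Type*}

section Aux

variable [Fintype A] [Nonempty A] [MeasurableSpace A]
  (P : Measure (ℕ → A)) [IsProbabilityMeasure P]

lemma cylP_nonneg {n : ℕ} (u : Fin n → A) : 0 ≤ cylP P u := ENNReal.toReal_nonneg

lemma cylP_le_one {n : ℕ} (u : Fin n → A) : cylP P u ≤ 1 := by
  have h := ENNReal.toReal_mono (by simp) (prob_le_one (μ := P) (s := cyl u))
  simpa [cylP] using h

lemma cylP_pos_iff {n : ℕ} (u : Fin n → A) : 0 < cylP P u ↔ 0 < P (cyl u) := by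
  rw [cylP, ENNReal.toReal_pos_iff]
  exact ⟨fun h => h.1, fun h => ⟨h, measure_lt_top _ _⟩⟩

lemma cylP_congr {n n' : ℕ} (h : n = n') (u : Fin n → A) (v : Fin n' → A)
    (huv : ∀ (i : ℕ) (h1 : i < n) (h2 : i < n'), u ⟨i, h1⟩ = v ⟨i, h2⟩) :
    cylP P u = cylP P v := by
  subst h
  have : u = v := funext fun i => by rcases i with ⟨i, hi⟩; exact huv i hi hi
  rw [this]

lemma cylP_mono {k N : ℕ} (hkN : k ≤ N) (u : Fin N → A) (w : Fin k → A)
    (hw : ∀ i : Fin k, w i = u ⟨i, lt_of_lt_of_le i.isLt hkN⟩) :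
    cylP P u ≤ cylP P w := by
  apply ENNReal.toReal_mono (measure_ne_top P _)
  apply measure_mono
  intro z hz i
  rw [hw i]
  exact hz ⟨i, lt_of_lt_of_le i.isLt hkN⟩

lemma exists_snoc {k : ℕ} (w : Fin k → A) (hw : 0 < cylP P w) :
    ∃ a : A, 0 < cylP P (Fin.snoc w a) := by
  by_contra h
  push_neg at h
  have hz : ∀ a : A, P (cyl (Fin.snoc w a)) = 0 := by
    intro a
    have h0 : cylP P (Fin.snoc w a) = 0 := le_antisymm (h a) (cylP_nonneg P _)
    rw [cylP, ENNReal.toReal_eq_zero_iff] at h0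
    exact h0.resolve_right (measure_ne_top P _)
  have hsub : cyl w ⊆ ⋃ a : A, cyl (Fin.snoc w a) := by
    intro z hz
    refine Set.mem_iUnion.mpr ⟨z k, fun i => ?_⟩
    induction i using Fin.lastCases with
    | last => simpa using (Fin.snoc_last (α := fun _ => A) w (z k)).symm
    | cast j =>
      have := hz j
      simpa [Fin.snoc_castSucc] using this
  have hle : P (cyl w) ≤ ∑' a : A, P (cyl (Fin.snoc w a)) :=
    (measure_mono hsub).trans (measure_iUnion_le _)
  simp only [hz, tsum_zero] at hle
  have : cylP P w = 0 := by rw [cylP, le_antisymm hle zero_le]; simp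
  exact absurd this (ne_of_gt hw)

/-- Pick an extension letter keeping positive measure. -/
noncomputable def pickA {k : ℕ} (w : Fin k → A) : A :=
  if h : ∃ a : A, 0 < cylP P (Fin.snoc w a) then h.choose else Classical.arbitrary A

lemma pickA_spec {k : ℕ} (w : Fin k → A) (hw : 0 < cylP P w) :
    0 < cylP P (Fin.snoc w (pickA P w)) := by
  have hex := exists_snoc P w hw
  rw [pickA, dif_pos hex]
  exact hex.choose_spec

/-- Extend a word step by step keeping positive cylinder measure. -/
noncomputable def extWord {N : ℕ} (w : Fin N → A) : (k : ℕ) → Fin (N + k) → A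
  | 0 => w
  | k + 1 => Fin.snoc (extWord w k) (pickA P (extWord w k))

lemma extWord_pos {N : ℕ} (w : Fin N → A) (hw : 0 < cylP P w) :
    ∀ k, 0 < cylP P (extWord P w k)
  | 0 => hw
  | k + 1 => pickA_spec P _ (extWord_pos w hw k)

lemma extWord_agree_succ {N : ℕ} (w : Fin N → A) (k : ℕ) (i : ℕ)
    (h : i < N + k) (h' : i < N + (k + 1)) :
    extWord P w (k + 1) ⟨i, h'⟩ = extWord P w k ⟨i, h⟩ := by
  have hc : (⟨i, h'⟩ : Fin (N + (k + 1))) = Fin.castSucc ⟨i, h⟩ := rfl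
  simp only [extWord, hc, Fin.snoc_castSucc]

lemma extWord_agree {N : ℕ} (w : Fin N → A) :
    ∀ (k k' : ℕ), k ≤ k' → ∀ (i : ℕ) (h : i < N + k) (h' : i < N + k'),
      extWord P w k' ⟨i, h'⟩ = extWord P w k ⟨i, h⟩ := by
  intro k k' hkk'
  induction k' with
  | zero =>
    intro i h h'
    have : k = 0 := Nat.le_zero.mp hkk'
    subst this; rfl
  | succ k'' ih =>
    intro i h h'
    rcases Nat.lt_or_ge k (k'' + 1) with hlt | hge
    · have hk : k ≤ k'' := by omega
      rw [extWord_agree_succ P w k'' i (by omega) h']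
      exact ih hk i h (by omega)
    · have : k = k'' + 1 := by omega
      subst this; rfl

lemma exists_extension {N : ℕ} (w : Fin N → A) (hw : 0 < cylP P w) :
    ∃ x : ℕ → A, (∀ (i : ℕ) (h : i < N), x i = w ⟨i, h⟩) ∧
      ∀ k, 0 < cylP P (fun i : Fin k => x i) := by
  refine ⟨fun n => extWord P w (n + 1) ⟨n, by omega⟩, ?_, ?_⟩
  · intro i h
    exact extWord_agree P w 0 (i + 1) (by omega) i (by omega) (by omega)
  · intro k
    refine lt_of_lt_of_le (extWord_pos P w hw k) ?_
    apply cylP_mono P (Nat.le_add_left k N) (extWord P w k)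
    intro i
    have hik := i.isLt
    exact (extWord_agree P w (i.val + 1) k (by omega) i.val (by omega) (by omega)).symm

lemma shift_iterate_apply_s18 : ∀ (j : ℕ) (z : ℕ → A) (n : ℕ), (shift (A := A))^[j] z n = z (n + j)
  | 0, z, n => rfl
  | j + 1, z, n => by
    rw [Function.iterate_succ_apply, shift_iterate_apply_s18 j (shift z) n]
    rfl

lemma pos_shift (hinv : MeasurePreserving (shift (A := A)) P P) (x : ℕ → A)
    (hx : ∀ k, 0 < cylP P (fun i : Fin k => x i)) (j k : ℕ) :
    0 < cylP P (fun i : Fin k => x (j + i)) := by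
  have hmp := hinv.iterate j
  have hsub : cyl (fun i : Fin (j + k) => x i) ⊆
      (shift (A := A))^[j] ⁻¹' cyl (fun i : Fin k => x (j + i)) := by
    intro z hz i
    have hik := i.isLt
    show (shift (A := A))^[j] z i = x (j + (i : ℕ))
    rw [shift_iterate_apply_s18]
    have h2 : z ((i : ℕ) + j) = x ((i : ℕ) + j) := hz ⟨(i : ℕ) + j, by omega⟩
    rw [h2]
    exact congrArg x (by omega)
  have h1 : P (cyl (fun i : Fin (j + k) => x i)) ≤ P (cyl (fun i : Fin k => x (j + i))) := by
    calc P (cyl (fun i : Fin (j + k) => x i))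
        ≤ P ((shift (A := A))^[j] ⁻¹' cyl (fun i : Fin k => x (j + i))) := measure_mono hsub
      _ ≤ Measure.map ((shift (A := A))^[j]) P (cyl (fun i : Fin k => x (j + i))) :=
          Measure.le_map_apply hmp.measurable.aemeasurable _
      _ = P (cyl (fun i : Fin k => x (j + i))) := by rw [hmp.map_eq]
  rw [cylP_pos_iff] at *
  exact lt_of_lt_of_le ((cylP_pos_iff P _).mp (hx (j + k))) h1

lemma chain_lemma (C : ℕ → ℝ)
    (hdec : ∀ x : ℕ → A, (∀ k : ℕ, 0 < cylP P (fun i : Fin k => x i)) →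
      ∀ n m : ℕ, 0 < n → 0 < m →
        (C n)⁻¹ * cylP P (fun i : Fin n => x i) * cylP P (fun i : Fin m => x (n + i)) ≤
          cylP P (fun i : Fin (n + m) => x i))
    (δ0 : ℝ) (hδ0pos : 0 < δ0)
    (hδ0le : ∀ a : A, 0 < cylP P (fun _ : Fin 1 => a) → δ0 ≤ cylP P (fun _ : Fin 1 => a))
    (hC1pos : 0 < C 1) :
    ∀ (ℓ : ℕ) (y : ℕ → A), (∀ j k, 0 < cylP P (fun i : Fin k => y (j + i))) →
      ∀ m, 0 < m →
        ((C 1)⁻¹ * δ0) ^ ℓ * cylP P (fun i : Fin m => y (ℓ + i)) ≤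
          cylP P (fun i : Fin (ℓ + m) => y i) := by
  intro ℓ
  induction ℓ with
  | zero =>
    intro y hy m hm
    rw [pow_zero, one_mul]
    exact le_of_eq (cylP_congr P (Nat.zero_add m).symm _ _
      (fun i h1 h2 => congrArg y (Nat.zero_add i)))
  | succ ℓ ih =>
    intro y hy m hm
    set y' : ℕ → A := fun n => y (1 + n) with hy'def
    have hy'' : ∀ j k, 0 < cylP P (fun i : Fin k => y' (j + i)) := by
      intro j k
      have h := hy (1 + j) k
      have he : (fun i : Fin k => y' (j + (i : ℕ))) = fun i : Fin k => y ((1 + j) + (i : ℕ)) :=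
        funext fun i => congrArg y (by omega)
      rw [he]; exact h
    have Hih := ih y' hy'' m hm
    have Hy0 : ∀ k', 0 < cylP P (fun i : Fin k' => y i) := by
      intro k'
      have h := hy 0 k'
      have he : (fun i : Fin k' => y (0 + (i : ℕ))) = fun i : Fin k' => y i :=
        funext fun i => congrArg y (Nat.zero_add _)
      rwa [he] at h
    have Hdec := hdec y Hy0 1 (ℓ + m) one_pos (by omega)
    have E0 : (fun i : Fin 1 => y (i : ℕ)) = (fun _ : Fin 1 => y 0) :=
      funext fun i => congrArg y (by omega)
    rw [E0] at Hdec
    have hδ0' : δ0 ≤ cylP P (fun _ : Fin 1 => y 0) := by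
      apply hδ0le
      have h := Hy0 1
      rwa [E0] at h
    have Em : (fun i : Fin m => y' (ℓ + (i : ℕ))) = fun i : Fin m => y ((ℓ + 1) + (i : ℕ)) :=
      funext fun i => congrArg y (by omega)
    have Efin : cylP P (fun i : Fin (1 + (ℓ + m)) => y (i : ℕ)) =
        cylP P (fun i : Fin ((ℓ + 1) + m) => y (i : ℕ)) :=
      cylP_congr P (by omega) _ _ (fun i h1 h2 => rfl)
    have hT : (0:ℝ) ≤ cylP P (fun i : Fin (ℓ + m) => y (1 + (i : ℕ))) := cylP_nonneg P _
    have hinv1 : (0:ℝ) ≤ (C 1)⁻¹ := inv_nonneg.mpr hC1pos.le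
    calc ((C 1)⁻¹ * δ0) ^ (ℓ + 1) * cylP P (fun i : Fin m => y ((ℓ + 1) + (i : ℕ)))
        = ((C 1)⁻¹ * δ0) * (((C 1)⁻¹ * δ0) ^ ℓ * cylP P (fun i : Fin m => y' (ℓ + (i : ℕ)))) := by
          rw [Em]; ring
      _ ≤ ((C 1)⁻¹ * δ0) * cylP P (fun i : Fin (ℓ + m) => y' (i : ℕ)) := by
          apply mul_le_mul_of_nonneg_left Hih
          exact mul_nonneg hinv1 hδ0pos.le
      _ = ((C 1)⁻¹ * δ0) * cylP P (fun i : Fin (ℓ + m) => y (1 + (i : ℕ))) := rfl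
      _ ≤ (C 1)⁻¹ * cylP P (fun _ : Fin 1 => y 0) *
            cylP P (fun i : Fin (ℓ + m) => y (1 + (i : ℕ))) := by
          rw [mul_assoc, mul_assoc]
          apply mul_le_mul_of_nonneg_left _ hinv1
          exact mul_le_mul_of_nonneg_right hδ0' hT
      _ ≤ cylP P (fun i : Fin (1 + (ℓ + m)) => y (i : ℕ)) := Hdec
      _ = cylP P (fun i : Fin ((ℓ + 1) + m) => y (i : ℕ)) := Efin

lemma append_apply_left {p q : ℕ} (u : Fin p → A) (v : Fin q → A) (i : ℕ)
    (h : i < p) (h' : i < p + q) : Fin.append u v ⟨i, h'⟩ = u ⟨i, h⟩ := by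
  have hc : (⟨i, h'⟩ : Fin (p + q)) = Fin.castAdd q ⟨i, h⟩ := rfl
  rw [hc, Fin.append_left]

lemma append_apply_right {p q : ℕ} (u : Fin p → A) (v : Fin q → A) (i : ℕ)
    (h : i < q) (h' : p + i < p + q) : Fin.append u v ⟨p + i, h'⟩ = v ⟨i, h⟩ := by
  have hc : (⟨p + i, h'⟩ : Fin (p + q)) = Fin.natAdd p ⟨i, h⟩ := rfl
  rw [hc, Fin.append_right]

end Aux

/-- Suppose `P_{n+m}(x_1^{n+m}) ≥ C_n⁻¹ P_n(x_1^n) P_m(x_{n+1}^{n+m})`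
for every `x` in the support of `P` (with `C_n = e^{o(n)}`), and the support satisfies
the flexible specification property with gaps `τ_n = o(n)`. Then `P` satisfies SLD with
some `e^{o(n)}`-sequence `(C_n')`. -/
theorem stmt18 {A : Type*} [Fintype A] [Nonempty A] [MeasurableSpace A]
    (P : Measure (ℕ → A)) [IsProbabilityMeasure P]
    (hinv : MeasurePreserving (shift (A := A)) P P)
    (C : ℕ → ℝ) (hC1 : ∀ n, 1 ≤ C n)
    (hCo : Tendsto (fun n : ℕ => Real.log (C n) / n) atTop (nhds 0))
    (τ : ℕ → ℕ)
    (hτo : Tendsto (fun n : ℕ => (τ n : ℝ) / n) atTop (nhds 0))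
    (hdec : ∀ x : ℕ → A, (∀ k : ℕ, 0 < cylP P (fun i : Fin k => x i)) →
      ∀ n m : ℕ, 0 < n → 0 < m →
        (C n)⁻¹ * cylP P (fun i : Fin n => x i) * cylP P (fun i : Fin m => x (n + i)) ≤
          cylP P (fun i : Fin (n + m) => x i))
    (hspec : ∀ (n m : ℕ), 0 < n → 0 < m → ∀ (u : Fin n → A) (v : Fin m → A),
      0 < cylP P u → 0 < cylP P v →
      ∃ ℓ ≤ τ n, ∃ ξ : Fin ℓ → A, 0 < cylP P (Fin.append (Fin.append u ξ) v)) :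
    ∃ C' : ℕ → ℝ, (∀ n, 0 < C' n) ∧
      Tendsto (fun n : ℕ => Real.log (C' n) / n) atTop (nhds 0) ∧
      ∀ (n m : ℕ), 0 < n → 0 < m → ∀ (u : Fin n → A) (v : Fin m → A),
        ∃ ℓ ≤ τ n, ∃ ξ : Fin ℓ → A,
          (C' n)⁻¹ * cylP P u * cylP P v ≤ cylP P (Fin.append (Fin.append u ξ) v) := by
  classical
  -- a letter with positive probability
  obtain ⟨a0, ha0⟩ : ∃ a : A, 0 < cylP P (fun _ : Fin 1 => a) := by
    have hempty : 0 < cylP P (fun i : Fin 0 => (i.elim0 : A)) := by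
      have hcyl : cyl (fun i : Fin 0 => (i.elim0 : A)) = Set.univ := by
        ext z; simp only [cyl, Set.mem_setOf_eq, Set.mem_univ, iff_true]
        exact fun i => i.elim0
      rw [cylP, hcyl]
      simp
    obtain ⟨a, ha⟩ := exists_snoc P _ hempty
    refine ⟨a, ?_⟩
    have he : (fun _ : Fin 1 => a) = Fin.snoc (fun i : Fin 0 => (i.elim0 : A)) a := by
      funext i
      have : i = Fin.last 0 := Subsingleton.elim _ _
      rw [this, Fin.snoc_last]
    rw [he]
    exact ha
  set f : A → ℝ := fun a => cylP P (fun _ : Fin 1 => a) with hf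
  set S : Finset A := Finset.univ.filter (fun a => 0 < f a) with hSdef
  have hSne : S.Nonempty := ⟨a0, by simp [hSdef, hf, ha0]⟩
  set δ0 : ℝ := S.inf' hSne f with hδ0def
  have hδ0pos : 0 < δ0 := by
    rw [hδ0def, Finset.lt_inf'_iff]
    intro b hb
    exact (Finset.mem_filter.mp hb).2
  have hδ0le : ∀ a : A, 0 < cylP P (fun _ : Fin 1 => a) → δ0 ≤ cylP P (fun _ : Fin 1 => a) :=
    fun a h => Finset.inf'_le f (Finset.mem_filter.mpr ⟨Finset.mem_univ a, h⟩)
  have hδ0le1 : δ0 ≤ 1 := le_trans (hδ0le a0 ha0) (cylP_le_one P _)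
  have hC1pos : (0:ℝ) < C 1 := lt_of_lt_of_le one_pos (hC1 1)
  set δ : ℝ := (C 1)⁻¹ * δ0 with hδdef
  have hδpos : 0 < δ := mul_pos (inv_pos.mpr hC1pos) hδ0pos
  have hδle1 : δ ≤ 1 := mul_le_one₀ (inv_le_one_of_one_le₀ (hC1 1)) hδ0pos.le hδ0le1
  have hCpos : ∀ n, (0:ℝ) < C n := fun n => lt_of_lt_of_le one_pos (hC1 n)
  refine ⟨fun n => C n / δ ^ τ n, ?_, ?_, ?_⟩
  · intro n
    exact div_pos (hCpos n) (pow_pos hδpos _)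
  · have hlog : ∀ n : ℕ, Real.log (C n / δ ^ τ n) = Real.log (C n) - (τ n : ℝ) * Real.log δ := by
      intro n
      rw [Real.log_div (ne_of_gt (hCpos n)) (ne_of_gt (pow_pos hδpos _)), Real.log_pow]
    have h2 : Tendsto (fun n : ℕ => Real.log (C n) / n - Real.log δ * ((τ n : ℝ) / n))
        atTop (nhds 0) := by
      have := hCo.sub (hτo.const_mul (Real.log δ))
      simpa using this
    refine h2.congr fun n => ?_
    rw [hlog]
    ring
  · intro n m hn hm u v
    by_cases hu : 0 < cylP P u
    · by_cases hv : 0 < cylP P v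
      · obtain ⟨ℓ, hℓ, ξ, hpos⟩ := hspec n m hn hm u v hu hv
        refine ⟨ℓ, hℓ, ξ, ?_⟩
        obtain ⟨x, hx1, hx2⟩ := exists_extension P _ hpos
        -- rewrite the big cylinder
        have E1 : cylP P (Fin.append (Fin.append u ξ) v) =
            cylP P (fun i : Fin (n + (ℓ + m)) => x i) :=
          cylP_congr P (by omega) _ _ (fun i h1 h2 => (hx1 i h1).symm)
        have Eu : cylP P (fun i : Fin n => x i) = cylP P u := by
          apply cylP_congr P rfl
          intro i h1 h2
          rw [hx1 i (by omega), append_apply_left _ _ i (by omega) (by omega),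
            append_apply_left u ξ i h2 (by omega)]
        set y : ℕ → A := fun k => x (n + k) with hydef
        have hychain : ∀ j k, 0 < cylP P (fun i : Fin k => y (j + i)) := by
          intro j k
          have h := pos_shift P hinv x hx2 (n + j) k
          have he : (fun i : Fin k => y (j + (i : ℕ))) =
              fun i : Fin k => x ((n + j) + (i : ℕ)) :=
            funext fun i => congrArg x (by omega)
          rw [he]; exact h
        have Hchain := chain_lemma P C hdec δ0 hδ0pos hδ0le hC1pos ℓ y hychain m hm
        have Ev : (fun i : Fin m => y (ℓ + (i : ℕ))) = v := by
          funext i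
          show x (n + (ℓ + (i : ℕ))) = v i
          have he : x (n + (ℓ + (i : ℕ))) = x ((n + ℓ) + (i : ℕ)) := congrArg x (by omega)
          rw [he, hx1 ((n + ℓ) + (i : ℕ)) (by omega),
            append_apply_right (Fin.append u ξ) v (i : ℕ) i.isLt (by omega)]
        rw [Ev] at Hchain
        have Hdec := hdec x hx2 n (ℓ + m) hn (by omega)
        rw [Eu] at Hdec
        have hEy : (fun i : Fin (ℓ + m) => x (n + (i : ℕ))) =
            fun i : Fin (ℓ + m) => y (i : ℕ) := rfl
        rw [hEy] at Hdec
        have hpow : δ ^ τ n ≤ δ ^ ℓ := pow_le_pow_of_le_one hδpos.le hδle1 hℓ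
        have hinvn : (0:ℝ) ≤ (C n)⁻¹ := inv_nonneg.mpr (hCpos n).le
        have hinveq : (C n / δ ^ τ n)⁻¹ = (C n)⁻¹ * δ ^ τ n := by
          rw [div_eq_mul_inv, mul_inv, inv_inv]
        calc (C n / δ ^ τ n)⁻¹ * cylP P u * cylP P v
            = (C n)⁻¹ * cylP P u * (δ ^ τ n * cylP P v) := by rw [hinveq]; ring
          _ ≤ (C n)⁻¹ * cylP P u * (δ ^ ℓ * cylP P v) := by
              apply mul_le_mul_of_nonneg_left
                (mul_le_mul_of_nonneg_right hpow hv.le)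
                (mul_nonneg hinvn hu.le)
          _ ≤ (C n)⁻¹ * cylP P u * cylP P (fun i : Fin (ℓ + m) => y (i : ℕ)) := by
              apply mul_le_mul_of_nonneg_left Hchain (mul_nonneg hinvn hu.le)
          _ ≤ cylP P (fun i : Fin (n + (ℓ + m)) => x (i : ℕ)) := Hdec
          _ = cylP P (Fin.append (Fin.append u ξ) v) := E1.symm
      · refine ⟨0, Nat.zero_le _, fun i => i.elim0, ?_⟩
        have hv0 : cylP P v = 0 := le_antisymm (not_lt.mp hv) (cylP_nonneg P v)
        rw [hv0, mul_zero]
        exact cylP_nonneg P _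
    · refine ⟨0, Nat.zero_le _, fun i => i.elim0, ?_⟩
      have hu0 : cylP P u = 0 := le_antisymm (not_lt.mp hu) (cylP_nonneg P u)
      rw [hu0, mul_zero, zero_mul]
      exact cylP_nonneg P _

end RT
end
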